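/- arXiv:1805.01635 — 11 statements merged into one kernel-verified Lean document; each statement's English description precedes it below -/
import Mathlib

section
/- Let X be a subset of ω^{<ω} such that every infinite extension of X is closed and discrete in ω^ω (with the product topology). Then for every σ ∈ ω^ω there exists m ∈ ω such that the set of elements of X comparable with σ|m is finite. -/
/-!
Suppose some `σ` is such that every `σ|m` is comparable with infinitely many members of `X`.
Only finitely many lists are prefixes of `σ|m`, so every `σ|m` has an extension in `X`.
Send `s ∈ X` to the sequence that follows `s`, differs from `σ` at position `|s|`, and follows
`σ` from then on. This map is injective, so its image is an infinite extension of `X`; that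
image avoids `σ`, yet the images of the extensions of the `σ|m` converge to `σ`, so it is not
closed.
-/

/-- The initial segment `σ|n` of an infinite sequence `σ ∈ ω^ω`. -/
def initSeg (σ : ℕ → ℕ) (n : ℕ) : List ℕ :=
  (List.range n).map σ

/-- `σ ∈ ω^ω` extends the finite sequence `s` (written `σ ⊐ s`). -/
def SeqExtends (σ : ℕ → ℕ) (s : List ℕ) : Prop :=
  initSeg σ s.length = s

/-- Two finite sequences are comparable if one is an initial segment of the
other. -/
def Compat (s t : List ℕ) : Prop :=
  s <+: t ∨ t <+: s

/-- `A ⊆ ω^ω` is an infinite extension of `B ⊆ ω^{<ω}`: there is a bijection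
`φ : B → A` with `φ(s) ⊐ s` for every `s ∈ B`. -/
def IsInfExtension (A : Set (ℕ → ℕ)) (B : Set (List ℕ)) : Prop :=
  ∃ φ : List ℕ → (ℕ → ℕ), Set.BijOn φ B A ∧ ∀ s ∈ B, SeqExtends (φ s) s

open Filter Topology

lemma initSeg_length (σ : ℕ → ℕ) (n : ℕ) : (initSeg σ n).length = n := by
  simp [initSeg]

lemma initSeg_getElem (σ : ℕ → ℕ) {n k : ℕ} (hk : k < (initSeg σ n).length) :
    (initSeg σ n)[k] = σ k := by
  simp [initSeg]

lemma SeqExtends.apply_eq {τ : ℕ → ℕ} {s : List ℕ} (h : SeqExtends τ s) {n : ℕ}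
    (hn : n < s.length) : τ n = s[n] := by
  have hn' : n < (initSeg τ s.length).length := by rwa [initSeg_length]
  rw [← initSeg_getElem τ hn']
  exact List.getElem_of_eq h hn'

lemma SeqExtends.apply_eq_of_initSeg_prefix {τ σ : ℕ → ℕ} {s : List ℕ} (h : SeqExtends τ s)
    {m n : ℕ} (hpre : initSeg σ m <+: s) (hn : n < m) : τ n = σ n := by
  have hn' : n < (initSeg σ m).length := by rwa [initSeg_length]
  rw [h.apply_eq (lt_of_lt_of_le hn' hpre.length_le), ← hpre.getElem hn', initSeg_getElem]

lemma tendsto_of_seqExtends_of_initSeg_prefix {σ : ℕ → ℕ} {s : ℕ → List ℕ} {τ : ℕ → ℕ → ℕ}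
    (hpre : ∀ m, initSeg σ m <+: s m) (hτ : ∀ m, SeqExtends (τ m) (s m)) :
    Tendsto τ atTop (𝓝 σ) := by
  refine tendsto_pi_nhds.2 fun n => tendsto_const_nhds.congr' ?_
  filter_upwards [eventually_gt_atTop n] with m hm
  exact ((hτ m).apply_eq_of_initSeg_prefix (hpre m) hm).symm

lemma isInfExtension_image {φ : List ℕ → ℕ → ℕ} (hφ : Function.Injective φ) (B : Set (List ℕ))
    (hext : ∀ s ∈ B, SeqExtends (φ s) s) : IsInfExtension (φ '' B) B :=
  ⟨φ, hφ.injOn.bijOn_image, hext⟩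

lemma exists_mem_prefix_of_infinite {X : Set (List ℕ)} {L : List ℕ}
    (hX : {s ∈ X | Compat s L}.Infinite) : ∃ s ∈ X, L <+: s := by
  have hfin : {s : List ℕ | s <+: L}.Finite := by
    simpa only [← List.mem_inits] using L.inits.finite_toSet
  obtain ⟨s, ⟨hsX, hcompat⟩, hnot⟩ := (hX.sdiff hfin).nonempty
  exact ⟨s, hsX, hcompat.resolve_left hnot⟩

def graft (σ : ℕ → ℕ) (s : List ℕ) (n : ℕ) : ℕ :=
  if h : n < s.length then s[n] else if n = s.length then σ n + 1 else σ n

section graft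

variable (σ : ℕ → ℕ) (s : List ℕ)

lemma graft_of_lt {n : ℕ} (hn : n < s.length) : graft σ s n = s[n] := by
  simp [graft, hn]

@[simp]
lemma graft_length : graft σ s s.length = σ s.length + 1 := by
  simp [graft]

lemma graft_of_length_lt {n : ℕ} (hn : s.length < n) : graft σ s n = σ n := by
  simp [graft, hn.not_gt, hn.ne']

lemma seqExtends_graft : SeqExtends (graft σ s) s :=
  List.ext_getElem (initSeg_length _ _) fun n _ hn => by
    rw [initSeg_getElem, graft_of_lt σ s hn]

lemma graft_ne : graft σ s ≠ σ := fun h => by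
  simpa using congrFun h s.length

lemma graft_injective : Function.Injective (graft σ) := by
  intro s t hst
  have hlen : s.length = t.length := by
    by_contra hne
    rcases lt_or_gt_of_ne hne with hlt | hlt
    · simpa [graft_of_length_lt σ s hlt] using congrFun hst t.length
    · simpa [graft_of_length_lt σ t hlt] using congrFun hst s.length
  refine List.ext_getElem hlen fun n hs ht => ?_
  rw [← graft_of_lt σ s hs, ← graft_of_lt σ t ht, hst]

end graft

/-- If every infinite extension of `X ⊆ ω^{<ω}` is closed and discrete in `ω^ω`
(with the product topology), then for every `σ ∈ ω^ω` there is `m ∈ ω` such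
that only finitely many elements of `X` are comparable with `σ|m`. -/
theorem finitely_many_compatible_of_infExtensions_closed_discrete (X : Set (List ℕ))
    (h : ∀ A : Set (ℕ → ℕ), IsInfExtension A X → IsClosed A ∧ DiscreteTopology A) :
    ∀ σ : ℕ → ℕ, ∃ m : ℕ, {s ∈ X | Compat s (initSeg σ m)}.Finite := by
  intro σ
  by_contra! hinf
  choose s hsX hpre using fun m => exists_mem_prefix_of_infinite (hinf m)
  have hclosed : IsClosed (graft σ '' X) :=
    (h _ (isInfExtension_image (graft_injective σ) X fun t _ => seqExtends_graft σ t)).1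
  have hlim : Tendsto (fun m => graft σ (s m)) atTop (𝓝 σ) :=
    tendsto_of_seqExtends_of_initSeg_prefix hpre fun m => seqExtends_graft σ (s m)
  obtain ⟨t, -, ht⟩ :=
    hclosed.mem_of_tendsto hlim (Eventually.of_forall fun m => ⟨s m, hsX m, rfl⟩)
  exact graft_ne σ t ht
end

section
/- Let D ⊆ ω^{<ω} be a set of pairwise incomparable finite sequences all of whose infinite extensions are closed and discrete in ω^ω, let {d_n : n ∈ ω} be a one-to-one enumeration of D, and let (D_n)_{n∈ω} be sets with the same two properties. Then the set E = ⋃_{n∈ω} d_n ⌢ D_n (concatenating each element of D_n after d_n) again consists of pairwise incomparable sequences and every infinite extension of E is closed and discrete in ω^ω. -/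
/-- Membership in the class `𝒟`: the elements of `D` are pairwise incomparable,
and every infinite extension of `D` is closed and discrete in `ω^ω` with the
product topology. -/
def MemD (D : Set (List ℕ)) : Prop :=
  (∀ s ∈ D, ∀ t ∈ D, s ≠ t → ¬ Compat s t) ∧
    ∀ A : Set (ℕ → ℕ), IsInfExtension A D → IsClosed A ∧ DiscreteTopology A

/-!
The sets `{σ | σ ⊐ s}` for `s ∈ D` are pairwise disjoint clopen cylinders, and for `D ∈ 𝒟`
their union is closed: a point outside it is kept away from every cylinder by the closedness of
the extension of `D` by zeros. Hence this family is locally finite, and an infinite extension of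
`E` is the union of the pieces lying in the cylinders of the `d n`. Shifting by `|d n|` turns the
piece in the `n`-th cylinder into an infinite extension of `D_n`, so each piece is closed, and a
locally finite union of closed sets is closed. Discreteness only needs incomparability: the
cylinder of `e ∈ E` isolates the point extending `e`.
-/

open Set Function PiNat

lemma seqExtends_iff {σ : ℕ → ℕ} {s : List ℕ} :
    SeqExtends σ s ↔ ∀ i (hi : i < s.length), σ i = s[i] := by
  simp [SeqExtends, initSeg, List.ext_getElem_iff]

lemma seqExtends_getD (s : List ℕ) : SeqExtends (fun i => s.getD i 0) s :=
  seqExtends_iff.2 fun _ hi => List.getD_eq_getElem s 0 hi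

lemma setOf_seqExtends_eq_cylinder (s : List ℕ) :
    {σ | SeqExtends σ s} = cylinder (fun i => s.getD i 0) s.length := by
  ext σ
  simp only [mem_ofPred_eq, seqExtends_iff, mem_cylinder_iff]
  exact forall_congr' fun i => ⟨fun h hi => (h hi).trans (List.getD_eq_getElem s 0 hi).symm,
    fun h hi => (h hi).trans (List.getD_eq_getElem s 0 hi)⟩

lemma isClopen_setOf_seqExtends (s : List ℕ) : IsClopen {σ | SeqExtends σ s} := by
  rw [setOf_seqExtends_eq_cylinder]
  refine ⟨?_, isOpen_cylinder _ _ _⟩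
  rw [cylinder_eq_pi]
  exact isClosed_set_pi fun i _ => isClosed_singleton

lemma initSeg_prefix_initSeg (σ : ℕ → ℕ) {m n : ℕ} (h : m ≤ n) :
    initSeg σ m <+: initSeg σ n := by
  have : initSeg σ m = (initSeg σ n).take m := by
    simp [initSeg, ← List.map_take, List.take_range, Nat.min_eq_left h]
  exact this ▸ List.take_prefix m _

lemma compat_of_seqExtends {σ : ℕ → ℕ} {s t : List ℕ} (hs : SeqExtends σ s)
    (ht : SeqExtends σ t) : Compat s t := by
  rcases le_total s.length t.length with h | h
  · exact Or.inl (hs ▸ ht ▸ initSeg_prefix_initSeg σ h)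
  · exact Or.inr (hs ▸ ht ▸ initSeg_prefix_initSeg σ h)

lemma Compat.of_append {s s' t t' : List ℕ} (h : Compat (s ++ s') (t ++ t')) : Compat s t := by
  rcases h with h | h
  · exact List.prefix_or_prefix_of_prefix ((List.prefix_append s s').trans h)
      (List.prefix_append t t')
  · exact (List.prefix_or_prefix_of_prefix ((List.prefix_append t t').trans h)
      (List.prefix_append s s')).symm

lemma compat_append_left_iff {u s t : List ℕ} : Compat (u ++ s) (u ++ t) ↔ Compat s t := by
  simp only [Compat, List.prefix_append_right_inj]

lemma seqExtends_append {σ : ℕ → ℕ} {s t : List ℕ} :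
    SeqExtends σ (s ++ t) ↔ SeqExtends σ s ∧ SeqExtends (fun i => σ (s.length + i)) t := by
  simp only [SeqExtends, initSeg, List.length_append, List.range_add, List.map_append,
    List.map_map, Function.comp_def]
  exact ⟨fun h => List.append_inj h (by simp), fun ⟨h₁, h₂⟩ => by rw [h₁, h₂]⟩

lemma eq_of_seqExtends_of_shift_eq {σ τ : ℕ → ℕ} {s : List ℕ} (hσ : SeqExtends σ s)
    (hτ : SeqExtends τ s) (h : (fun i => σ (s.length + i)) = fun i => τ (s.length + i)) :
    σ = τ := by
  funext i
  rcases lt_or_ge i s.length with hi | hi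
  · exact ((seqExtends_iff.1 hσ i hi).trans (seqExtends_iff.1 hτ i hi).symm)
  · simpa [Nat.add_sub_cancel' hi] using congrFun h (i - s.length)

lemma MemD.isAntichain {D : Set (List ℕ)} (hD : MemD D) : IsAntichain Compat D :=
  hD.1

lemma isInfExtension_image_of_subset {φ : List ℕ → ℕ → ℕ} {A : Set (ℕ → ℕ)}
    {B B' : Set (List ℕ)} (hφ : BijOn φ B A) (hext : ∀ s ∈ B, SeqExtends (φ s) s)
    (hB' : B' ⊆ B) : IsInfExtension (φ '' B') B' :=
  ⟨φ, (hφ.injOn.mono hB').bijOn_image, fun s hs => hext s (hB' hs)⟩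

lemma IsInfExtension.discreteTopology {A : Set (ℕ → ℕ)} {B : Set (List ℕ)}
    (hB : IsAntichain Compat B) (hA : IsInfExtension A B) : DiscreteTopology A := by
  obtain ⟨φ, hφ, hext⟩ := hA
  rw [discreteTopology_subtype_iff', ← hφ.image_eq]
  rintro _ ⟨s, hs, rfl⟩
  refine ⟨_, (isClopen_setOf_seqExtends s).isOpen, Subset.antisymm ?_ ?_⟩
  · rintro _ ⟨hη, t, ht, rfl⟩
    rw [hB.eq hs ht (compat_of_seqExtends hη (hext t ht))]
    rfl
  · rintro _ rfl
    exact ⟨hext s hs, mem_image_of_mem φ hs⟩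

lemma MemD.of_isClosed {B : Set (List ℕ)} (hB : IsAntichain Compat B)
    (hcl : ∀ A, IsInfExtension A B → IsClosed A) : MemD B :=
  ⟨hB, fun A hA => ⟨hcl A hA, hA.discreteTopology hB⟩⟩

lemma IsInfExtension.shift {A : Set (ℕ → ℕ)} {B : Set (List ℕ)} {s : List ℕ}
    (hA : IsInfExtension A ((s ++ ·) '' B)) :
    IsInfExtension ((fun σ i => σ (s.length + i)) '' A) B := by
  obtain ⟨φ, hφ, hext⟩ := hA
  have hextB : ∀ t ∈ B, SeqExtends (φ (s ++ t)) s ∧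
      SeqExtends (fun i => φ (s ++ t) (s.length + i)) t := fun t ht =>
    seqExtends_append.1 (hext _ (mem_image_of_mem _ ht))
  refine ⟨fun t i => φ (s ++ t) (s.length + i), ⟨?_, ?_, ?_⟩, fun t ht => (hextB t ht).2⟩
  · exact fun t ht => ⟨φ (s ++ t), hφ.mapsTo (mem_image_of_mem _ ht), rfl⟩
  · intro t ht t' ht' h
    have := eq_of_seqExtends_of_shift_eq (hextB t ht).1 (hextB t' ht').1 h
    exact List.append_cancel_left (hφ.injOn (mem_image_of_mem _ ht) (mem_image_of_mem _ ht') this)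
  · rintro _ ⟨σ, hσ, rfl⟩
    obtain ⟨_, ⟨t, ht, rfl⟩, rfl⟩ := hφ.surjOn hσ
    exact ⟨t, ht, rfl⟩

lemma MemD.isClosed_of_isInfExtension_append {A : Set (ℕ → ℕ)} {B : Set (List ℕ)}
    {s : List ℕ} (hB : MemD B) (hA : IsInfExtension A ((s ++ ·) '' B)) : IsClosed A := by
  have hAs : A ⊆ {σ | SeqExtends σ s} := by
    obtain ⟨φ, hφ, hext⟩ := hA
    rw [← hφ.image_eq]
    rintro _ ⟨_, ⟨t, ht, rfl⟩, rfl⟩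
    exact (seqExtends_append.1 (hext _ ⟨t, ht, rfl⟩)).1
  have hA_eq : A = {σ | SeqExtends σ s} ∩
      (fun σ i => σ (s.length + i)) ⁻¹' ((fun σ i => σ (s.length + i)) '' A) := by
    refine Subset.antisymm (fun σ hσ => ⟨hAs hσ, mem_image_of_mem _ hσ⟩) ?_
    rintro σ ⟨hσ, τ, hτ, hτσ⟩
    rwa [eq_of_seqExtends_of_shift_eq hσ (hAs hτ) hτσ.symm]
  rw [hA_eq]
  exact (isClopen_setOf_seqExtends s).isClosed.inter
    ((hB.2 _ hA.shift).1.preimage (by fun_prop))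

lemma MemD.isClosed_setOf_exists_seqExtends {D : Set (List ℕ)} (hD : MemD D) :
    IsClosed {σ | ∃ s ∈ D, SeqExtends σ s} := by
  set pad : List ℕ → ℕ → ℕ := fun s i => s.getD i 0
  have hpad : IsClosed (pad '' D) := by
    refine (hD.2 _ ⟨pad, InjOn.bijOn_image fun s hs t ht h => ?_, fun s _ => seqExtends_getD s⟩).1
    have hst : SeqExtends (pad s) t := by
      rw [h]
      exact seqExtends_getD t
    exact hD.isAntichain.eq hs ht (compat_of_seqExtends (seqExtends_getD s) hst)
  rw [← isOpen_compl_iff, isOpen_iff_mem_nhds]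
  intro σ hσ
  have hσpad : σ ∉ pad '' D := by
    rintro ⟨s, hs, rfl⟩
    exact hσ ⟨s, hs, seqExtends_getD s⟩
  obtain ⟨k, hk⟩ := exists_disjoint_cylinder hpad hσpad
  filter_upwards [(isOpen_cylinder _ σ k).mem_nhds (self_mem_cylinder σ k)]
  rintro η hη ⟨s, hs, hηs⟩
  rw [mem_cylinder_iff] at hη
  rw [seqExtends_iff] at hηs
  rcases le_total s.length k with h | h
  · exact hσ ⟨s, hs, seqExtends_iff.2 fun i hi => (hη i (hi.trans_le h)).symm.trans (hηs i hi)⟩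
  · refine disjoint_left.1 hk (mem_image_of_mem pad hs) (mem_cylinder_iff.2 fun i hi => ?_)
    simp only [pad, List.getD_eq_getElem s 0 (hi.trans_le h)]
    exact (hηs i (hi.trans_le h)).symm.trans (hη i hi)

lemma MemD.locallyFinite_setOf_seqExtends {D : Set (List ℕ)} (hD : MemD D) {ι : Type*}
    {d : ι → List ℕ} (hd : Injective d) (hdD : ∀ i, d i ∈ D) :
    LocallyFinite fun i => {σ | SeqExtends σ (d i)} := by
  intro σ
  by_cases h : ∃ s ∈ D, SeqExtends σ s
  · obtain ⟨s, hs, hσs⟩ := h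
    refine ⟨_, (isClopen_setOf_seqExtends s).isOpen.mem_nhds hσs, ?_⟩
    refine (show {i | d i = s}.Subsingleton from fun i hi j hj => hd (hi.trans hj.symm)).finite
      |>.subset ?_
    rintro i ⟨η, hηi, hηs⟩
    exact hD.isAntichain.eq (hdD i) hs (compat_of_seqExtends hηi hηs)
  · refine ⟨_, hD.isClosed_setOf_exists_seqExtends.isOpen_compl.mem_nhds h, ?_⟩
    exact finite_empty.subset fun i ⟨η, hηi, hη⟩ => hη ⟨d i, hdD i, hηi⟩

lemma isAntichain_iUnion_append {D : Set (List ℕ)} (hD : IsAntichain Compat D) {ι : Type*}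
    {d : ι → List ℕ} (hd : Injective d) (hdD : ∀ i, d i ∈ D) {Dn : ι → Set (List ℕ)}
    (hDn : ∀ i, IsAntichain Compat (Dn i)) : IsAntichain Compat (⋃ i, (d i ++ ·) '' Dn i) := by
  intro _ he _ hf hne hc
  simp only [mem_iUnion, mem_image] at he hf
  obtain ⟨i, s, hs, rfl⟩ := he
  obtain ⟨j, t, ht, rfl⟩ := hf
  obtain rfl : i = j := hd (hD.eq (hdD i) (hdD j) hc.of_append)
  exact hne (congrArg _ ((hDn i).eq hs ht (compat_append_left_iff.1 hc)))

/-- If `D ∈ 𝒟`, `{d_n : n ∈ ω}` is a one-to-one enumeration of `D`, and each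
`D_n ∈ 𝒟`, then `E = ⋃_n d_n ⌢ D_n` again belongs to `𝒟`: it consists of
pairwise incomparable sequences and every infinite extension of `E` is closed
and discrete in `ω^ω`. -/
theorem memD_iUnion_concat (D : Set (List ℕ)) (hD : MemD D) (d : ℕ → List ℕ)
    (hinj : Function.Injective d) (hrange : Set.range d = D)
    (Dn : ℕ → Set (List ℕ)) (hDn : ∀ n, MemD (Dn n)) :
    MemD (⋃ n : ℕ, (fun t => d n ++ t) '' Dn n) := by
  have hdD : ∀ n, d n ∈ D := fun n => hrange ▸ mem_range_self n
  refine MemD.of_isClosed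
    (isAntichain_iUnion_append hD.isAntichain hinj hdD fun n => (hDn n).isAntichain) ?_
  rintro A ⟨φ, hφ, hext⟩
  have hpiece_subset : ∀ n, φ '' ((d n ++ ·) '' Dn n) ⊆ {σ | SeqExtends σ (d n)} := by
    rintro n _ ⟨_, ⟨s, hs, rfl⟩, rfl⟩
    exact (seqExtends_append.1 (hext _ (mem_iUnion_of_mem n (mem_image_of_mem _ hs)))).1
  have hpiece_closed : ∀ n, IsClosed (φ '' ((d n ++ ·) '' Dn n)) := fun n =>
    (hDn n).isClosed_of_isInfExtension_append
      (isInfExtension_image_of_subset hφ hext (subset_iUnion (fun i => (d i ++ ·) '' Dn i) n))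
  rw [← hφ.image_eq, image_iUnion]
  exact ((hD.locallyFinite_setOf_seqExtends hinj hdD).subset hpiece_subset).isClosed_iUnion
    hpiece_closed
end

section
/- Let Y be a Tychonoff space, X ⊆ Y a closed subspace, dY a compactification of Y, and cX a compactification of X which is smaller than the closure of X in dY (i.e., there is a continuous map from the closure of X in dY onto cX restricting to the identity on X). Then there exists a compactification cY of Y such that the closure of X in cY is equivalent to cX. -/
universe u

open Topology

structure Compactification (X : Type u) [TopologicalSpace X] : Type (u + 1) where
  space : Type u
  [ts : TopologicalSpace space]
  [compact : CompactSpace space]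
  [t2 : T2Space space]
  emb : X → space
  isEmbedding : IsEmbedding emb
  dense : DenseRange emb

attribute [instance] Compactification.ts Compactification.compact Compactification.t2

/-!
Glue `cX` into `dY` along `g : cl X → cX`, i.e. collapse every fibre of `g` to a point. Since
`cl X` is compact the quotient map is closed, so the quotient is again compact Hausdorff. The fibre
of `g` over a point of `X` is that point alone, because `g` is continuous and restricts to an
embedding on the dense subset `X`; hence `Y` still embeds in the quotient. The closure of `X`
there is `cl X` modulo the fibres of `g`, which is `cX`.
-/

open Filter Set Function

section General

variable {A B C : Type*} [TopologicalSpace A] [TopologicalSpace B] [TopologicalSpace C]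

theorem IsClosedMap.t1Space [T1Space A] {f : A → B} (hf : IsClosedMap f) (hs : Surjective f) :
    T1Space B where
  t1 b := by
    obtain ⟨a, rfl⟩ := hs b
    rw [← image_singleton]
    exact hf _ isClosed_singleton

theorem IsClosedMap.normalSpace [NormalSpace A] {f : A → B} (hf : IsClosedMap f)
    (hc : Continuous f) (hs : Surjective f) : NormalSpace B where
  normal s t hs' ht' hst := separatedNhds_iff_disjoint.2 <| by
    rw [← disjoint_comap_iff hs, hf.comap_nhdsSet_eq hc, hf.comap_nhdsSet_eq hc]
    exact disjoint_nhdsSet_nhdsSet (hs'.preimage hc) (ht'.preimage hc) (hst.preimage f)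

theorem IsClosedMap.isEmbedding_comp {f : A → B} {q : B → C} (hf : IsEmbedding f)
    (hq : IsClosedMap q) (hqc : Continuous q) (hfib : ∀ a b, q b = q (f a) → b = f a) :
    IsEmbedding (q ∘ f) := by
  refine ⟨isInducing_iff_nhds.2 fun a => ?_, fun _ _ h => hf.injective (hfib _ _ h)⟩
  have hfibre : q ⁻¹' {q (f a)} = {f a} := by
    ext b
    exact ⟨hfib a b, fun hb => congrArg q hb⟩
  rw [← comap_comap, comp_apply, hq.comap_nhds_eq hqc, hfibre, nhdsSet_singleton,
    hf.isInducing.nhds_eq_comap]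

theorem DenseRange.eq_of_isInducing_comp [T2Space B] {j : A → B} (hj : DenseRange j)
    (hjc : Continuous j) {g : B → C} (hg : Continuous g) (hgj : IsInducing (g ∘ j))
    {b : B} {a : A} (h : g b = g (j a)) : b = j a := by
  have : (comap j (𝓝 b)).NeBot :=
    comap_neBot_iff_frequently.2 (mem_closure_iff_frequently.1 (hj b))
  have hjb : Tendsto j (comap j (𝓝 b)) (𝓝 b) := tendsto_comap
  have hja : Tendsto id (comap j (𝓝 b)) (𝓝 a) :=
    hgj.tendsto_nhds_iff.2 <| by
      simpa only [comp_id, comp_apply, ← h] using (hg.tendsto b).comp hjb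
  exact tendsto_nhds_unique hjb ((hjc.tendsto a).comp hja)

theorem Topology.IsQuotientMap.exists_homeomorph_comp_eq {f : A → B} {g : A → C}
    (hf : IsQuotientMap f) (hg : IsQuotientMap g) (h : ∀ a a', f a = f a' ↔ g a = g a') :
    ∃ e : B ≃ₜ C, e ∘ f = g := by
  let φ := IsQuotientMap.homeomorph (f := ⟨f, hf.continuous⟩) hf
  let ψ := IsQuotientMap.homeomorph (f := ⟨g, hg.continuous⟩) hg
  refine ⟨φ.symm.trans ((Homeomorph.Quotient.congrRight fun a a' => h a a').trans ψ), ?_⟩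
  funext a
  have hφ : φ.symm (f a) = Quotient.mk _ a := φ.symm_apply_eq.2 rfl
  simp only [comp_apply, Homeomorph.trans_apply, hφ]
  rfl

theorem Continuous.surjective_of_denseRange_comp [CompactSpace A] [T2Space B] {g : A → B}
    (hg : Continuous g) {ι : Type*} {j : ι → A} (h : DenseRange (g ∘ j)) : Surjective g :=
  fun b => h.induction (range_comp_subset_range j g) (isCompact_range hg).isClosed b

instance compactSpace_closure [CompactSpace A] (s : Set A) : CompactSpace (closure s) :=
  isCompact_iff_compactSpace.1 isClosed_closure.isCompact

end General

section Adjunction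

variable {Z W : Type*} (K : Set Z) (g : K → W)

-- Its quotient is the adjunction space `Z ∪_g g(K)`.
def adjunctionSetoid : Setoid Z where
  r a b := a = b ∨ ∃ (ha : a ∈ K) (hb : b ∈ K), g ⟨a, ha⟩ = g ⟨b, hb⟩
  iseqv := by
    refine ⟨fun a => Or.inl rfl, ?_, ?_⟩
    · rintro a b (rfl | ⟨ha, hb, h⟩)
      exacts [Or.inl rfl, Or.inr ⟨hb, ha, h.symm⟩]
    · rintro a b c (rfl | ⟨ha, hb, hab⟩) (rfl | ⟨hb', hc, hbc⟩)
      exacts [Or.inl rfl, Or.inr ⟨hb', hc, hbc⟩, Or.inr ⟨ha, hb, hab⟩,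
        Or.inr ⟨ha, hc, hab.trans hbc⟩]

variable {K g}

theorem mk_adjunctionSetoid_eq_iff {a b : Z} :
    Quotient.mk (adjunctionSetoid K g) a = Quotient.mk _ b ↔
      a = b ∨ ∃ (ha : a ∈ K) (hb : b ∈ K), g ⟨a, ha⟩ = g ⟨b, hb⟩ :=
  Quotient.eq

theorem preimage_image_mk_adjunctionSetoid (C : Set Z) :
    Quotient.mk (adjunctionSetoid K g) ⁻¹' (Quotient.mk _ '' C) =
      C ∪ (↑) '' (g ⁻¹' (g '' ((↑) ⁻¹' C))) := by
  ext a
  simp only [mem_preimage, mem_image, mem_union, mk_adjunctionSetoid_eq_iff]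
  constructor
  · rintro ⟨c, hc, rfl | ⟨hc', ha, h⟩⟩
    · exact Or.inl hc
    · exact Or.inr ⟨⟨a, ha⟩, ⟨⟨c, hc'⟩, hc, h⟩, rfl⟩
  · rintro (ha | ⟨a', ⟨c', hc', h⟩, rfl⟩)
    · exact ⟨a, ha, Or.inl rfl⟩
    · exact ⟨c', hc', Or.inr ⟨c'.2, a'.2, h⟩⟩

variable [TopologicalSpace Z] [TopologicalSpace W]

theorem isClosedMap_mk_adjunctionSetoid [T2Space Z] [T2Space W] (hK : IsCompact K)
    (hg : Continuous g) : IsClosedMap (Quotient.mk (adjunctionSetoid K g)) := fun C hC => by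
  have : CompactSpace K := isCompact_iff_compactSpace.1 hK
  have hq : IsQuotientMap (Quotient.mk (adjunctionSetoid K g)) := isQuotientMap_quotient_mk'
  rw [← hq.isClosed_preimage, preimage_image_mk_adjunctionSetoid]
  have hgC : IsClosed (g '' ((↑) ⁻¹' C)) :=
    ((hC.preimage continuous_subtype_val).isCompact.image hg).isClosed
  exact hC.union ((hgC.preimage hg).isCompact.image continuous_subtype_val).isClosed

theorem t2Space_quotient_adjunctionSetoid [CompactSpace Z] [T2Space Z] [T2Space W]
    (hK : IsClosed K) (hg : Continuous g) : T2Space (Quotient (adjunctionSetoid K g)) :=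
  have hq := isClosedMap_mk_adjunctionSetoid hK.isCompact hg
  have := hq.normalSpace continuous_quot_mk Quotient.mk_surjective
  have := hq.t1Space Quotient.mk_surjective
  inferInstance

end Adjunction

namespace Compactification

variable {Y : Type u} [TopologicalSpace Y] (dY : Compactification Y) (X : Set Y)

def embClosure (x : X) : closure (dY.emb '' X) :=
  ⟨dY.emb x, subset_closure (mem_image_of_mem _ x.2)⟩

theorem continuous_embClosure : Continuous (dY.embClosure X) :=
  (dY.isEmbedding.continuous.comp continuous_subtype_val).subtype_mk _

theorem denseRange_embClosure : DenseRange (dY.embClosure X) := by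
  have hrange : range (Subtype.val ∘ dY.embClosure X) = dY.emb '' X :=
    (image_eq_range _ _).symm
  rw [DenseRange, Subtype.dense_iff, ← range_comp, hrange]

variable {X}

theorem mem_of_emb_mem_closure (hX : IsClosed X) {y : Y}
    (h : dY.emb y ∈ closure (dY.emb '' X)) : y ∈ X := by
  rwa [← mem_preimage, ← dY.isEmbedding.closure_eq_preimage_closure_image, hX.closure_eq] at h

variable {W : Type*} [TopologicalSpace W] {g : closure (dY.emb '' X) → W}

theorem eq_emb_of_mk_adjunctionSetoid_eq (hX : IsClosed X) (hg : Continuous g)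
    (hgi : IsInducing (g ∘ dY.embClosure X)) {y : Y} {d : dY.space}
    (h : Quotient.mk (adjunctionSetoid _ g) d = Quotient.mk _ (dY.emb y)) : d = dY.emb y := by
  rcases mk_adjunctionSetoid_eq_iff.1 h with rfl | ⟨hd, hy, hgdy⟩
  · rfl
  · have hyX := dY.mem_of_emb_mem_closure hX hy
    exact congrArg Subtype.val <| (dY.denseRange_embClosure X).eq_of_isInducing_comp
      (dY.continuous_embClosure X) hg hgi (a := ⟨y, hyX⟩) hgdy

variable [T2Space W]

noncomputable def adjunction (hX : IsClosed X) (hg : Continuous g)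
    (hgi : IsInducing (g ∘ dY.embClosure X)) : Compactification Y where
  space := Quotient (adjunctionSetoid (closure (dY.emb '' X)) g)
  t2 := t2Space_quotient_adjunctionSetoid isClosed_closure hg
  emb := Quotient.mk _ ∘ dY.emb
  isEmbedding := (isClosedMap_mk_adjunctionSetoid isClosed_closure.isCompact hg).isEmbedding_comp
    dY.isEmbedding continuous_quot_mk fun _ _ => dY.eq_emb_of_mk_adjunctionSetoid_eq hX hg hgi
  dense := Quotient.mk_surjective.denseRange.comp dY.dense continuous_quot_mk

variable (hX : IsClosed X) (hg : Continuous g) (hgi : IsInducing (g ∘ dY.embClosure X))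

theorem closure_adjunction_emb_image :
    closure ((dY.adjunction hX hg hgi).emb '' X) =
      Quotient.mk _ '' closure (dY.emb '' X) := by
  change closure ((Quotient.mk _ ∘ dY.emb) '' X) = _
  rw [image_comp]
  exact (isClosedMap_mk_adjunctionSetoid isClosed_closure.isCompact hg)
    |>.closure_image_eq_of_continuous continuous_quot_mk _

theorem exists_homeomorph_closure_adjunction (hgs : Surjective g) :
    ∃ e : closure ((dY.adjunction hX hg hgi).emb '' X) ≃ₜ W,
      e ∘ (dY.adjunction hX hg hgi).embClosure X = g ∘ dY.embClosure X := by
  let m (z : closure (dY.emb '' X)) : closure ((dY.adjunction hX hg hgi).emb '' X) :=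
    ⟨Quotient.mk _ z, by rw [closure_adjunction_emb_image]; exact mem_image_of_mem _ z.2⟩
  have hm : IsQuotientMap m := by
    refine .of_surjective_continuous ?_
      ((continuous_quot_mk.comp continuous_subtype_val).subtype_mk _)
    rintro ⟨w, hw⟩
    rw [closure_adjunction_emb_image] at hw
    obtain ⟨z, hz, rfl⟩ := hw
    exact ⟨⟨z, hz⟩, rfl⟩
  have hfib (z z' : closure (dY.emb '' X)) : m z = m z' ↔ g z = g z' := by
    rw [Subtype.ext_iff]
    refine mk_adjunctionSetoid_eq_iff.trans ⟨?_, fun h => Or.inr ⟨z.2, z'.2, h⟩⟩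
    rintro (hzz' | ⟨_, _, hgzz'⟩)
    · exact congrArg g (Subtype.ext hzz')
    · exact hgzz'
  obtain ⟨e, he⟩ := hm.exists_homeomorph_comp_eq (.of_surjective_continuous hgs hg) hfib
  exact ⟨e, funext fun x => congrFun he (dY.embClosure X x)⟩

end Compactification

theorem extend_compactification_general {Y : Type u} [TopologicalSpace Y]
    (X : Set Y) (hX : IsClosed X) (dY : Compactification Y) (cX : Compactification X)
    (hsmall : ∃ g : ↥(closure (dY.emb '' X)) → cX.space, Continuous g ∧
      ∀ (x : Y) (hx : x ∈ X),
        g ⟨dY.emb x, subset_closure (Set.mem_image_of_mem _ hx)⟩ = cX.emb ⟨x, hx⟩) :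
    ∃ cY : Compactification Y,
      (∃ g : ↥(closure (cY.emb '' X)) → cX.space, Continuous g ∧
        ∀ (x : Y) (hx : x ∈ X),
          g ⟨cY.emb x, subset_closure (Set.mem_image_of_mem _ hx)⟩ = cX.emb ⟨x, hx⟩) ∧
      (∃ g' : cX.space → ↥(closure (cY.emb '' X)), Continuous g' ∧
        ∀ (x : Y) (hx : x ∈ X),
          g' (cX.emb ⟨x, hx⟩) = ⟨cY.emb x, subset_closure (Set.mem_image_of_mem _ hx)⟩) := by
  obtain ⟨g, hg, hgx⟩ := hsmall
  have hgX : g ∘ dY.embClosure X = cX.emb := funext fun x => hgx x x.2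
  have hgi : IsInducing (g ∘ dY.embClosure X) := hgX ▸ cX.isEmbedding.isInducing
  have hgs : Surjective g := hg.surjective_of_denseRange_comp (hgX ▸ cX.dense)
  obtain ⟨e, he⟩ := dY.exists_homeomorph_closure_adjunction hX hg hgi hgs
  have heX (x : Y) (hx : x ∈ X) :
      e ⟨(dY.adjunction hX hg hgi).emb x, subset_closure (mem_image_of_mem _ hx)⟩ =
        cX.emb ⟨x, hx⟩ :=
    congrFun (he.trans hgX) ⟨x, hx⟩
  exact ⟨dY.adjunction hX hg hgi, ⟨e, e.continuous, heX⟩,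
    ⟨e.symm, e.symm.continuous, fun x hx => e.symm_apply_eq.2 (heX x hx).symm⟩⟩

/-- Let `Y` be Tychonoff, `X ⊆ Y` closed, `dY` a compactification of `Y`, and
`cX` a compactification of `X` which is smaller than the closure of `X` in
`dY`.  Then there is a compactification `cY` of `Y` such that the closure of
`X` in `cY` is equivalent to `cX` (there are continuous maps in both
directions restricting to the identity on `X`). -/
theorem extend_compactification {Y : Type u} [TopologicalSpace Y] [T35Space Y]
    (X : Set Y) (hX : IsClosed X) (dY : Compactification Y) (cX : Compactification X)
    (hsmall : ∃ g : ↥(closure (dY.emb '' X)) → cX.space, Continuous g ∧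
      ∀ (x : Y) (hx : x ∈ X),
        g ⟨dY.emb x, subset_closure (Set.mem_image_of_mem _ hx)⟩ = cX.emb ⟨x, hx⟩) :
    ∃ cY : Compactification Y,
      (∃ g : ↥(closure (cY.emb '' X)) → cX.space, Continuous g ∧
        ∀ (x : Y) (hx : x ∈ X),
          g ⟨cY.emb x, subset_closure (Set.mem_image_of_mem _ hx)⟩ = cX.emb ⟨x, hx⟩) ∧
      (∃ g' : cX.space → ↥(closure (cY.emb '' X)), Continuous g' ∧
        ∀ (x : Y) (hx : x ∈ X),
          g' (cX.emb ⟨x, hx⟩) = ⟨cY.emb x, subset_closure (Set.mem_image_of_mem _ hx)⟩) :=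
  extend_compactification_general X hX dY cX hsmall
end

section
/- If X is a closed, C*-embedded subspace of a Tychonoff space Y, then every compactification cX of X is of the form cX = closure of X in cY for some compactification cY of Y. -/
universe u

open Topology

set_option linter.unusedSectionVars false

/-- `X` is C*-embedded in `Y`: every bounded continuous real-valued function on
`X` extends continuously to `Y`. -/
def CStarEmbedded {Y : Type u} [TopologicalSpace Y] (X : Set Y) : Prop :=
  ∀ f : X → ℝ, Continuous f → (∃ M : ℝ, ∀ x, |f x| ≤ M) →
    ∃ g : Y → ℝ, Continuous g ∧ ∀ x : X, g x = f x

section Aux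

/-- point/closed-set separation by a `[0,1]`-valued real function. -/
theorem pc_sep {Z : Type*} [TopologicalSpace Z] [T1Space Z] [CompletelyRegularSpace Z]
    {y : Z} {K : Set Z} (hK : IsClosed K) (hy : y ∉ K) :
    ∃ f : Z → ℝ, Continuous f ∧ f y = 1 ∧ (∀ z ∈ K, f z = 0) ∧
      ∀ z, f z ∈ Set.Icc (0:ℝ) 1 := by
  obtain ⟨f, cf, hf0, hf1⟩ := CompletelyRegularSpace.completely_regular y K hK hy
  refine ⟨fun z => 1 - (f z : ℝ), by continuity, ?_, ?_, ?_⟩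
  · show (1:ℝ) - (f y : ℝ) = 1
    rw [hf0]; norm_num
  · intro z hz
    have h1 : f z = 1 := hf1 hz
    show (1:ℝ) - (f z : ℝ) = 0
    rw [h1]; norm_num
  · intro z
    have h := (f z).2
    simp only [Set.mem_Icc] at h ⊢
    constructor <;> [linarith [h.2]; linarith [h.1]]

variable {Y : Type u} [TopologicalSpace Y] [T35Space Y] {X : Set Y}

def Idx (cX : Compactification X) : Type u :=
  {p : (Y → ℝ) × (cX.space → ℝ) //
    Continuous p.1 ∧ Continuous p.2 ∧ (∀ z, p.1 z ∈ Set.Icc (0:ℝ) 1) ∧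
      (∀ k, p.2 k ∈ Set.Icc (0:ℝ) 1) ∧ ∀ x : X, p.1 x = p.2 (cX.emb x)}

variable (cX : Compactification X)

def ev : Y → (Idx cX → ↥(Set.Icc (0:ℝ) 1)) := fun y i => ⟨i.1.1 y, i.2.2.2.1 y⟩

def Jmap : cX.space → (Idx cX → ↥(Set.Icc (0:ℝ) 1)) := fun k i => ⟨i.1.2 k, i.2.2.2.2.1 k⟩

theorem cont_ev : Continuous (ev cX) :=
  continuous_pi fun i => (i.2.1).subtype_mk _

theorem cont_Jmap : Continuous (Jmap cX) :=
  continuous_pi fun i => (i.2.2.1).subtype_mk _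

theorem ev_eq_Jmap (x : X) : ev cX (x : Y) = Jmap cX (cX.emb x) :=
  funext fun i => Subtype.ext (i.2.2.2.2.2 x)

/-- extend a `[0,1]`-valued function on `cX.space` to `Y` through the C*-embedding. -/
theorem lift' (hC : CStarEmbedded X) (φ : cX.space → ℝ) (hφ : Continuous φ)
    (h01 : ∀ k, φ k ∈ Set.Icc (0:ℝ) 1) :
    ∃ g : Y → ℝ, Continuous g ∧ (∀ z, g z ∈ Set.Icc (0:ℝ) 1) ∧
      ∀ x : X, g x = φ (cX.emb x) := by
  obtain ⟨g, cg, hg⟩ := hC (fun x => φ (cX.emb x)) (hφ.comp cX.isEmbedding.continuous)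
    ⟨1, fun x => abs_le.2 ⟨by linarith [(h01 (cX.emb x)).1], (h01 (cX.emb x)).2⟩⟩
  refine ⟨fun z => max 0 (min (g z) 1), continuous_const.max (cg.min continuous_const),
    fun z => ⟨le_max_left _ _, max_le zero_le_one (min_le_right _ _)⟩, fun x => ?_⟩
  show max 0 (min (g x) 1) = φ (cX.emb x)
  rw [hg x, min_eq_left (h01 (cX.emb x)).2, max_eq_right (h01 (cX.emb x)).1]

/-- The key separation lemma: indices separate points from closed sets. -/
theorem sep (hX : IsClosed X) (hC : CStarEmbedded X) {y : Y} {C : Set Y}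
    (hCc : IsClosed C) (hyC : y ∉ C) :
    ∃ i : Idx cX, i.1.1 y = 1 ∧ ∀ c ∈ C, i.1.1 c = 0 := by
  by_cases hy : y ∈ X
  · obtain ⟨f₂, cf₂, hf₂y, hf₂C, hf₂01⟩ := pc_sep hCc hyC
    set T : Set X := {x : X | f₂ x ≤ 3/4} with hTdef
    have hTc : IsClosed T := isClosed_le (cf₂.comp continuous_subtype_val) continuous_const
    have hyT : cX.emb ⟨y, hy⟩ ∉ closure (cX.emb '' T) := by
      intro h
      have h1 : (⟨y, hy⟩ : X) ∈ closure T := by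
        rw [cX.isEmbedding.closure_eq_preimage_closure_image]; exact h
      rw [hTc.closure_eq] at h1
      have : f₂ y ≤ 3/4 := h1
      rw [hf₂y] at this; norm_num at this
    obtain ⟨φ', cφ', hφ'y, hφ'T, hφ'01⟩ := pc_sep isClosed_closure hyT
    obtain ⟨g₂, cg₂, hg₂01, hg₂X⟩ := lift' cX hC φ' cφ' hφ'01
    set m : Y → ℝ := fun z => max 0 (min (4 * f₂ z - 2) 1) with hmdef
    have cm : Continuous m :=
      continuous_const.max (((cf₂.const_smul (4:ℝ)).sub continuous_const).min continuous_const)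
    set u : Y → ℝ := fun z => min (g₂ z) (m z) with hudef
    have hm0 : ∀ z, f₂ z ≤ 1/2 → m z = 0 := by
      intro z hz
      have : min (4 * f₂ z - 2) 1 ≤ 0 := le_trans (min_le_left _ _) (by linarith)
      simp only [hmdef]; rw [max_eq_left this]
    have hm1 : ∀ z, 3/4 ≤ f₂ z → m z = 1 := by
      intro z hz
      have : (1:ℝ) ≤ 4 * f₂ z - 2 := by linarith
      simp only [hmdef]; rw [min_eq_right this, max_eq_right zero_le_one]
    have hu01 : ∀ z, u z ∈ Set.Icc (0:ℝ) 1 :=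
      fun z => ⟨le_min (hg₂01 z).1 (le_max_left _ _), le_trans (min_le_left _ _) (hg₂01 z).2⟩
    have huX : ∀ x : X, u x = φ' (cX.emb x) := by
      intro x
      by_cases hx : f₂ x ≤ 3/4
      · have h0 : φ' (cX.emb x) = 0 := hφ'T _ (subset_closure (Set.mem_image_of_mem _ hx))
        have hg0 : g₂ x = 0 := by rw [hg₂X x, h0]
        show min (g₂ (x : Y)) (m (x : Y)) = φ' (cX.emb x)
        rw [hg0, h0]
        exact min_eq_left (le_max_left _ _)
      · push_neg at hx
        have : m x = 1 := hm1 _ hx.le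
        simp only [hudef, this]
        rw [min_eq_left (hg₂01 _).2, hg₂X x]
    have huy : u y = 1 := by
      have hg : g₂ y = 1 := by
        have := hg₂X ⟨y, hy⟩
        simpa [hφ'y] using this
      have hm : m y = 1 := hm1 _ (by rw [hf₂y]; norm_num)
      simp only [hudef, hg, hm, min_self]
    have huC : ∀ c ∈ C, u c = 0 := by
      intro c hc
      have hm : m c = 0 := hm0 _ (by rw [hf₂C c hc]; norm_num)
      simp only [hudef, hm]
      exact min_eq_right (hg₂01 c).1
    exact ⟨⟨(u, φ'), (cg₂.min cm), cφ', hu01, hφ'01, huX⟩, huy, huC⟩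
  · obtain ⟨f, cf, hfy, hfK, hf01⟩ := pc_sep (hX.union hCc)
      (by simp only [Set.mem_union]; tauto)
    exact ⟨⟨(f, fun _ => 0), cf, continuous_const, hf01,
      fun _ => ⟨le_refl 0, zero_le_one⟩, fun x => hfK x (Or.inl x.2)⟩,
      hfy, fun c hc => hfK c (Or.inr hc)⟩

theorem ev_embedding (hX : IsClosed X) (hC : CStarEmbedded X) : IsEmbedding (ev cX) := by
  refine ⟨isInducing_iff_nhds.2 fun y => le_antisymm ?_ ?_, ?_⟩
  · exact Filter.map_le_iff_le_comap.1 ((cont_ev cX).continuousAt (x := y))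
  · intro s hs
    obtain ⟨V, hVs, hVo, hyV⟩ := mem_nhds_iff.1 hs
    obtain ⟨i, hi1, hi0⟩ := sep cX hX hC hVo.isClosed_compl (fun h => h hyV)
    refine Filter.mem_comap.2 ⟨{w | (1:ℝ)/2 < (w i : ℝ)}, ?_, ?_⟩
    · refine IsOpen.mem_nhds (isOpen_lt continuous_const
        (continuous_subtype_val.comp (continuous_apply i))) ?_
      show (1:ℝ)/2 < i.1.1 y
      rw [hi1]; norm_num
    · intro z hz
      by_cases hzV : z ∈ V
      · exact hVs hzV
      · exfalso
        have : (1:ℝ)/2 < i.1.1 z := hz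
        rw [hi0 z hzV] at this; norm_num at this
  · intro a b hab
    by_contra hne
    obtain ⟨i, hi1, hi0⟩ := sep cX hX hC (isClosed_singleton (x := b))
      (by simpa using hne)
    have : i.1.1 a = i.1.1 b := congrArg Subtype.val (congrFun hab i)
    rw [hi1, hi0 b rfl] at this; norm_num at this

theorem Jmap_closedEmbedding (hC : CStarEmbedded X) : IsClosedEmbedding (Jmap cX) := by
  refine (cont_Jmap cX).isClosedEmbedding ?_
  intro k₁ k₂ h
  by_contra hne
  obtain ⟨φ, cφ, hφ1, hφ0, hφ01⟩ := pc_sep (Z := cX.space) isClosed_singleton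
    (by simpa using hne : k₁ ∉ ({k₂} : Set cX.space))
  obtain ⟨g, cg, hg01, hgX⟩ := lift' cX hC φ cφ hφ01
  have : φ k₁ = φ k₂ :=
    congrArg Subtype.val (congrFun h ⟨(g, φ), cg, cφ, hg01, hφ01, hgX⟩)
  rw [hφ1, hφ0 k₂ rfl] at this; norm_num at this

theorem closure_ev_image (hC : CStarEmbedded X) :
    closure (ev cX '' X) = Set.range (Jmap cX) := by
  have h1 : ev cX '' X = Jmap cX '' Set.range cX.emb := by
    ext w
    constructor
    · rintro ⟨x, hx, rfl⟩
      exact ⟨cX.emb ⟨x, hx⟩, ⟨⟨x, hx⟩, rfl⟩, (ev_eq_Jmap cX ⟨x, hx⟩).symm⟩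
    · rintro ⟨k, ⟨x, rfl⟩, rfl⟩
      exact ⟨(x : Y), x.2, by rw [ev_eq_Jmap cX x]⟩
  rw [h1, (Jmap_closedEmbedding cX hC).closure_image_eq, cX.dense.closure_range,
    Set.image_univ]

end Aux

/-- If `X` is a closed, C*-embedded subspace of a Tychonoff space `Y`, then
every compactification `cX` of `X` is of the form: the closure of `X` in `cY`
for some compactification `cY` of `Y` (that is, the closure of `X` in `cY` is
equivalent to `cX` as a compactification of `X`). -/

theorem compactification_extends_of_cstarEmbedded {Y : Type u} [TopologicalSpace Y]
    [T35Space Y] (X : Set Y) (hX : IsClosed X) (hC : CStarEmbedded X)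
    (cX : Compactification X) :
    ∃ cY : Compactification Y,
      (∃ g : ↥(closure (cY.emb '' X)) → cX.space, Continuous g ∧
        ∀ (x : Y) (hx : x ∈ X),
          g ⟨cY.emb x, subset_closure (Set.mem_image_of_mem _ hx)⟩ = cX.emb ⟨x, hx⟩) ∧
      (∃ g' : cX.space → ↥(closure (cY.emb '' X)), Continuous g' ∧
        ∀ (x : Y) (hx : x ∈ X),
          g' (cX.emb ⟨x, hx⟩) = ⟨cY.emb x, subset_closure (Set.mem_image_of_mem _ hx)⟩) := by
  classical
  haveI : CompactSpace ↥(Set.Icc (0:ℝ) 1) := isCompact_iff_compactSpace.mp isCompact_Icc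
  set K := closure (Set.range (ev cX)) with hKdef
  haveI : CompactSpace K := isCompact_iff_compactSpace.mp isClosed_closure.isCompact
  let e : Y → K := fun y => ⟨ev cX y, subset_closure ⟨y, rfl⟩⟩
  have he : IsEmbedding e :=
    IsEmbedding.of_comp ((cont_ev cX).subtype_mk _) continuous_subtype_val
      (ev_embedding cX hX hC)
  have hd : DenseRange e := by
    intro z
    rw [closure_subtype]
    have hr : Subtype.val '' Set.range e = Set.range (ev cX) := by
      ext w
      constructor
      · rintro ⟨z', ⟨y, rfl⟩, rfl⟩; exact ⟨y, rfl⟩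
      · rintro ⟨y, rfl⟩; exact ⟨e y, ⟨y, rfl⟩, rfl⟩
    rw [hr]
    exact z.2
  let cY : Compactification Y := { space := K, emb := e, isEmbedding := he, dense := hd }
  have hval : ∀ z : ↥(closure (cY.emb '' X)), (z : K).val ∈ Set.range (Jmap cX) := by
    intro z
    have h1 : (z : K).val ∈ closure (Subtype.val '' (cY.emb '' X)) := closure_subtype.mp z.2
    have h2 : Subtype.val '' (cY.emb '' X) = ev cX '' X := by
      ext w
      constructor
      · rintro ⟨z', ⟨y, hy, rfl⟩, rfl⟩; exact ⟨y, hy, rfl⟩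
      · rintro ⟨y, hy, rfl⟩; exact ⟨e y, ⟨y, hy, rfl⟩, rfl⟩
    rw [h2, closure_ev_image cX hC] at h1
    exact h1
  have hK1 : ∀ k : cX.space, Jmap cX k ∈ K := by
    intro k
    have : Jmap cX k ∈ closure (ev cX '' X) := by
      rw [closure_ev_image cX hC]; exact ⟨k, rfl⟩
    exact closure_mono (Set.image_subset_range _ _) this
  have hK2 : ∀ k : cX.space, (⟨Jmap cX k, hK1 k⟩ : K) ∈ closure (cY.emb '' X) := by
    intro k
    rw [closure_subtype]
    have h2 : Subtype.val '' (cY.emb '' X) = ev cX '' X := by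
      ext w
      constructor
      · rintro ⟨z', ⟨y, hy, rfl⟩, rfl⟩; exact ⟨y, hy, rfl⟩
      · rintro ⟨y, hy, rfl⟩; exact ⟨e y, ⟨y, hy, rfl⟩, rfl⟩
    rw [h2, closure_ev_image cX hC]
    exact ⟨k, rfl⟩
  let φe : cX.space → ↥(closure (cY.emb '' X)) := fun k => ⟨⟨Jmap cX k, hK1 k⟩, hK2 k⟩
  have hφec : Continuous φe := ((cont_Jmap cX).subtype_mk _).subtype_mk _
  have hφebij : Function.Bijective φe := by
    constructor
    · intro k₁ k₂ h
      exact (Jmap_closedEmbedding cX hC).injective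
        (congrArg (fun w => w.val.val) h)
    · intro z
      obtain ⟨k, hk⟩ := hval z
      exact ⟨k, Subtype.ext (Subtype.ext hk)⟩
  let homeo : cX.space ≃ₜ ↥(closure (cY.emb '' X)) :=
    Continuous.homeoOfEquivCompactToT2 (f := Equiv.ofBijective φe hφebij) hφec
  have hfwd : ∀ (x : Y) (hx : x ∈ X),
      homeo (cX.emb ⟨x, hx⟩) =
        ⟨cY.emb x, subset_closure (Set.mem_image_of_mem _ hx)⟩ := by
    intro x hx
    refine Subtype.ext (Subtype.ext ?_)
    exact (ev_eq_Jmap cX ⟨x, hx⟩).symm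
  refine ⟨cY, ⟨homeo.symm, homeo.symm.continuous, ?_⟩, ⟨homeo, homeo.continuous, hfwd⟩⟩
  intro x hx
  have := congrArg homeo.symm (hfwd x hx)
  rw [Homeomorph.symm_apply_apply] at this
  exact this.symm
end

section
/- Let X be a topological space with a complete sequence (ℱ_n)_{n∈ω} of covers, let cX be a compactification of X, and let F_n ∈ ℱ_n satisfy F₁ ⊇ F₂ ⊇ ⋯. Then the intersection over n of the closures of the F_n in cX is contained in X. -/
universe u

open Topology

/-- A sequence `(ℱ n)` of covers of `X` is complete if every (proper) filter
on `X` containing a member of each `ℱ n` has an accumulation (cluster) point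
in `X`. -/
def CompleteCoverSeq (X : Type u) [TopologicalSpace X] (ℱ : ℕ → Set (Set X)) : Prop :=
  (∀ n, ⋃₀ ℱ n = Set.univ) ∧
    ∀ F : Filter X, F.NeBot → (∀ n, ∃ S ∈ ℱ n, S ∈ F) → ∃ x : X, ClusterPt x F

/-- Let `(ℱ n)` be a complete sequence of covers of `X`, `cX` a
compactification of `X`, and `F n ∈ ℱ n` a decreasing sequence of sets.  Then
the intersection of the closures of the `F n` in `cX` is contained in `X`. -/
theorem iInter_closure_subset_of_completeCoverSeq {X : Type u} [TopologicalSpace X]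
    (ℱ : ℕ → Set (Set X)) (hcomplete : CompleteCoverSeq X ℱ)
    (c : Compactification X) (F : ℕ → Set X) (hF : ∀ n, F n ∈ ℱ n)
    (hmono : ∀ n, F (n + 1) ⊆ F n) :
    ⋂ n, closure (c.emb '' F n) ⊆ Set.range c.emb := by
  intro y hy
  simp only [Set.mem_iInter] at hy
  have hanti : Antitone F := antitone_nat_of_succ_le hmono
  set G : Filter X := Filter.comap c.emb (𝓝 y) ⊓ ⨅ n, Filter.principal (F n) with hG
  have hdir : Directed (· ≥ ·) (fun n => Filter.principal (F n)) := by
    intro m n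
    exact ⟨max m n, Filter.principal_mono.2 (hanti (le_max_left m n)),
      Filter.principal_mono.2 (hanti (le_max_right m n))⟩
  have hGne : G.NeBot := by
    rw [Filter.inf_neBot_iff]
    intro s hs t ht
    rcases Filter.mem_comap.1 hs with ⟨U, hU, hUs⟩
    rcases (Filter.mem_iInf_of_directed hdir t).1 ht with ⟨n, hn⟩
    have := (mem_closure_iff_nhds.1 (hy n)) U hU
    rcases this with ⟨z, hzU, x, hxF, hxz⟩
    exact ⟨x, hUs (by simpa [hxz] using hzU), hn hxF⟩
  have hmem : ∀ n, ∃ S ∈ ℱ n, S ∈ G := by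
    intro n
    refine ⟨F n, hF n, ?_⟩
    exact Filter.mem_inf_of_right (Filter.mem_iInf_of_mem n (Filter.mem_principal_self _))
  obtain ⟨x, hx⟩ := hcomplete.2 G hGne hmem
  have h1 : (𝓝 x ⊓ Filter.comap c.emb (𝓝 y)).NeBot :=
    hx.mono inf_le_left
  have h2 : (𝓝 (c.emb x) ⊓ 𝓝 y).NeBot := by
    have hmap : (Filter.map c.emb (𝓝 x ⊓ Filter.comap c.emb (𝓝 y))).NeBot := h1.map _
    refine hmap.mono ?_
    refine le_trans Filter.map_inf_le (inf_le_inf ?_ Filter.map_comap_le)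
    exact c.isEmbedding.continuous.continuousAt
  have : c.emb x = y := eq_of_nhds_neBot h2
  exact ⟨x, this⟩
end

section
/- Any topological space with a complete sequence of countable disjoint F_σ covers is an F_{σδ} set in every compactification. -/
universe u

open Topology

/-- A set is `F_σ` if it is a countable union of closed sets. -/
def IsFsigma {Y : Type*} [TopologicalSpace Y] (s : Set Y) : Prop :=
  ∃ F : ℕ → Set Y, (∀ n, IsClosed (F n)) ∧ s = ⋃ n, F n

/-!
Refine the covers `𝒟 n` into countable closed covers and intersect these level by level: this
gives countable closed covers `𝒩 n` of `X`, each member lying in a partial intersection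
`D 0 ∩ ⋯ ∩ D n` with `D i ∈ 𝒟 i`. In a compactification `K`, a point lying in the closures of
pairwise meeting `N n ∈ 𝒩 n` for all `n` comes from `X`: the `N n` pick out a single thread
through the disjoint covers `𝒟 n`, and completeness applies to it. So for disjoint `M, N` in
`⋃ 𝒩` the closed set `closure M ∩ closure N` misses `X`, and compactness puts `X` inside the
`F_σ` union of the closures of members of `⋃ 𝒩` that miss it. These countably many `F_σ` sets,
together with the unions of closures of members of each `𝒩 n`, cut out exactly `X`.
-/

open Set Filter

section Borel

variable {Y : Type*} [TopologicalSpace Y]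

def IsFsigmaDelta (s : Set Y) : Prop :=
  ∃ G : ℕ → Set Y, (∀ n, IsFsigma (G n)) ∧ s = ⋂ n, G n

theorem isFsigma_sUnion_of_isClosed {𝒮 : Set (Set Y)} (hc : 𝒮.Countable)
    (hcl : ∀ s ∈ 𝒮, IsClosed s) : IsFsigma (⋃₀ 𝒮) := by
  rcases 𝒮.eq_empty_or_nonempty with rfl | hne
  · exact ⟨fun _ => ∅, fun _ => isClosed_empty, by simp⟩
  · obtain ⟨f, hf⟩ := hc.exists_eq_range hne
    subst hf
    exact ⟨f, fun n => hcl _ (mem_range_self n), sUnion_range f⟩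

theorem isFsigmaDelta_sInter_of_isFsigma {𝒢 : Set (Set Y)} (hc : 𝒢.Countable)
    (hG : ∀ G ∈ 𝒢, IsFsigma G) : IsFsigmaDelta (⋂₀ 𝒢) := by
  rcases 𝒢.eq_empty_or_nonempty with rfl | hne
  · refine ⟨fun _ => univ, fun _ => ?_, by simp⟩
    exact ⟨fun _ => univ, fun _ => isClosed_univ, (iUnion_const _).symm⟩
  · obtain ⟨f, hf⟩ := hc.exists_eq_range hne
    subst hf
    exact ⟨f, fun n => hG _ (mem_range_self n), sInter_range f⟩

end Borel

section PartialMeets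

variable {X : Type*} {𝒜 : ℕ → Set (Set X)}

def partialMeets (𝒜 : ℕ → Set (Set X)) : ℕ → Set (Set X)
  | 0 => 𝒜 0
  | n + 1 => image2 (· ∩ ·) (partialMeets 𝒜 n) (𝒜 (n + 1))

theorem countable_partialMeets (h𝒜 : ∀ n, (𝒜 n).Countable) (n : ℕ) :
    (partialMeets 𝒜 n).Countable := by
  induction n with
  | zero => exact h𝒜 0
  | succ n ih => exact ih.image2 (h𝒜 (n + 1)) _

theorem isClosed_of_mem_partialMeets [TopologicalSpace X] (h𝒜 : ∀ n, ∀ P ∈ 𝒜 n, IsClosed P)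
    {n : ℕ} {N : Set X} (hN : N ∈ partialMeets 𝒜 n) : IsClosed N := by
  induction n generalizing N with
  | zero => exact h𝒜 0 N hN
  | succ n ih =>
    obtain ⟨M, hM, P, hP, rfl⟩ := hN
    exact (ih hM).inter (h𝒜 _ P hP)

theorem dissipate_mem_partialMeets {P : ℕ → Set X} (hP : ∀ i, P i ∈ 𝒜 i) (n : ℕ) :
    dissipate P n ∈ partialMeets 𝒜 n := by
  induction n with
  | zero => rw [dissipate_zero_nat]; exact hP 0
  | succ n ih => rw [dissipate_succ]; exact mem_image2_of_mem ih (hP (n + 1))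

theorem exists_subset_of_mem_partialMeets {n i : ℕ} {N : Set X} (hN : N ∈ partialMeets 𝒜 n)
    (hi : i ≤ n) : ∃ P ∈ 𝒜 i, N ⊆ P := by
  induction n generalizing N with
  | zero => exact ⟨N, by rwa [Nat.le_zero.1 hi], subset_rfl⟩
  | succ n ih =>
    obtain ⟨M, hM, Q, hQ, rfl⟩ := hN
    rcases Nat.of_le_succ hi with hi | rfl
    · obtain ⟨P, hP, hMP⟩ := ih hM hi
      exact ⟨P, hP, inter_subset_left.trans hMP⟩
    · exact ⟨Q, hQ, inter_subset_right⟩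

theorem exists_thread_of_pairwise_meet {𝒟 : ℕ → Set (Set X)}
    (hdisj : ∀ n, ∀ s ∈ 𝒟 n, ∀ t ∈ 𝒟 n, s ≠ t → Disjoint s t)
    (h𝒜 : ∀ i, ∀ P ∈ 𝒜 i, ∃ s ∈ 𝒟 i, P ⊆ s) {N : ℕ → Set X}
    (hN : ∀ n, N n ∈ partialMeets 𝒜 n) (hmeet : ∀ m n, (N m ∩ N n).Nonempty) :
    ∃ σ : ℕ → Set X, (∀ i, σ i ∈ 𝒟 i) ∧ ∀ n, N n ⊆ dissipate σ n := by
  have hsub : ∀ {n i}, i ≤ n → ∃ s ∈ 𝒟 i, N n ⊆ s := fun hi => by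
    obtain ⟨P, hP, hNP⟩ := exists_subset_of_mem_partialMeets (hN _) hi
    obtain ⟨s, hs, hPs⟩ := h𝒜 _ P hP
    exact ⟨s, hs, hNP.trans hPs⟩
  choose σ hσ hNσ using fun i => hsub (le_refl i)
  refine ⟨σ, hσ, fun n x hx => mem_dissipate.2 fun i hi => ?_⟩
  obtain ⟨s, hs, hNs⟩ := hsub hi
  obtain rfl : s = σ i := by
    by_contra hne
    obtain ⟨z, hzn, hzi⟩ := hmeet n i
    exact (hdisj i s hs (σ i) (hσ i) hne).le_bot ⟨hNs hzn, hNσ i hzi⟩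
  exact hNs hx

end PartialMeets

theorem exists_countable_closed_refinement {X : Type*} [TopologicalSpace X]
    {𝒟 : Set (Set X)} (hc : 𝒟.Countable) (hFσ : ∀ s ∈ 𝒟, IsFsigma s) :
    ∃ 𝒜 : Set (Set X), 𝒜.Countable ∧ (∀ P ∈ 𝒜, IsClosed P) ∧ (∀ P ∈ 𝒜, ∃ s ∈ 𝒟, P ⊆ s) ∧
      ⋃₀ 𝒜 = ⋃₀ 𝒟 := by
  have := hc.to_subtype
  choose F hFcl hFeq using fun s : 𝒟 => hFσ s s.2
  refine ⟨⋃ s : 𝒟, range (F s), countable_iUnion fun s => countable_range _, ?_, ?_, ?_⟩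
  · simp only [mem_iUnion, mem_range]
    rintro _ ⟨s, k, rfl⟩
    exact hFcl s k
  · simp only [mem_iUnion, mem_range]
    rintro _ ⟨s, k, rfl⟩
    exact ⟨s, s.2, (hFeq s).symm ▸ subset_iUnion _ k⟩
  · rw [sUnion_iUnion, sUnion_eq_iUnion (s := 𝒟)]
    exact iUnion_congr fun s => by rw [sUnion_range, ← hFeq s]

section Compactification

variable {X K : Type*} [TopologicalSpace K] {e : X → K}

def avoidingUnion (e : X → K) (𝒮 : Set (Set X)) (Z : Set K) : Set K :=
  ⋃₀ {C ∈ closure '' (image e '' 𝒮) | Disjoint C Z}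

theorem isFsigma_avoidingUnion {𝒮 : Set (Set X)} (h𝒮 : 𝒮.Countable) (Z : Set K) :
    IsFsigma (avoidingUnion e 𝒮 Z) :=
  isFsigma_sUnion_of_isClosed ((h𝒮.image _).image _ |>.mono (sep_subset _ _))
    fun _ ⟨⟨_, _, hC⟩, _⟩ => hC ▸ isClosed_closure

theorem disjoint_avoidingUnion (𝒮 : Set (Set X)) (Z : Set K) :
    Disjoint (avoidingUnion e 𝒮 Z) Z :=
  disjoint_sUnion_left.2 fun _ hC => hC.2

theorem range_subset_avoidingUnion [CompactSpace K] {𝒩 : ℕ → Set (Set X)}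
    (hcover : ∀ x, ∃ A : ℕ → Set X, Antitone A ∧ ∀ n, A n ∈ 𝒩 n ∧ x ∈ A n)
    (hthread : ∀ A : ℕ → Set X, (∀ n, A n ∈ 𝒩 n) → (∀ m n, (A m ∩ A n).Nonempty) →
      ∀ y, (∀ n, y ∈ closure (e '' A n)) → y ∈ range e)
    {Z : Set K} (hZ : IsClosed Z) (hZe : Disjoint (range e) Z) :
    range e ⊆ avoidingUnion e (⋃ n, 𝒩 n) Z := by
  rintro _ ⟨x, rfl⟩
  obtain ⟨A, hA, hAx⟩ := hcover x
  set C : ℕ → Set K := fun n => closure (e '' A n)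
  have hC : Antitone C := fun _ _ h => closure_mono (image_mono (hA h))
  have hZC : Z ∩ ⋂ n, C n = ∅ := eq_empty_iff_forall_notMem.2 fun y ⟨hyZ, hyC⟩ =>
    disjoint_left.1 hZe (hthread A (fun n => (hAx n).1)
      (fun m n => ⟨x, (hAx m).2, (hAx n).2⟩) y (mem_iInter.1 hyC)) hyZ
  obtain ⟨n, hn⟩ :=
    hZ.isCompact.elim_directed_family_closed C (fun _ => isClosed_closure) hZC hC.directed_ge
  refine ⟨C n, ⟨⟨e '' A n, ⟨A n, mem_iUnion.2 ⟨n, (hAx n).1⟩, rfl⟩, rfl⟩, ?_⟩,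
    subset_closure (mem_image_of_mem e (hAx n).2)⟩
  rwa [disjoint_iff_inter_eq_empty, inter_comm]

theorem mem_range_of_forall_mem_avoidingUnion {𝒩 : ℕ → Set (Set X)}
    (hthread : ∀ A : ℕ → Set X, (∀ n, A n ∈ 𝒩 n) → (∀ m n, (A m ∩ A n).Nonempty) →
      ∀ y, (∀ n, y ∈ closure (e '' A n)) → y ∈ range e)
    {y : K} (hplain : ∀ n, y ∈ ⋃₀ (closure '' (image e '' 𝒩 n)))
    (hpair : ∀ M ∈ ⋃ n, 𝒩 n, ∀ N ∈ ⋃ n, 𝒩 n, Disjoint M N →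
      y ∈ avoidingUnion e (⋃ n, 𝒩 n) (closure (e '' M) ∩ closure (e '' N))) :
    y ∈ range e := by
  have hA : ∀ n, ∃ A ∈ 𝒩 n, y ∈ closure (e '' A) := fun n => by
    obtain ⟨_, ⟨_, ⟨A, hA, rfl⟩, rfl⟩, hy⟩ := hplain n
    exact ⟨A, hA, hy⟩
  choose A hA hyA using hA
  refine hthread A hA (fun m n => ?_) y hyA
  rw [← not_disjoint_iff_nonempty_inter]
  intro hmn
  exact disjoint_left.1 (disjoint_avoidingUnion _ _)
    (hpair _ (mem_iUnion.2 ⟨m, hA m⟩) _ (mem_iUnion.2 ⟨n, hA n⟩) hmn) ⟨hyA m, hyA n⟩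

variable [TopologicalSpace X]

theorem Topology.IsInducing.preimage_closure_image_eq (he : IsInducing e) {C : Set X}
    (hC : IsClosed C) : e ⁻¹' closure (e '' C) = C := by
  rw [← he.closure_eq_preimage_closure_image, hC.closure_eq]

theorem Topology.IsInducing.eq_of_clusterPt [T2Space K] (he : IsInducing e) {F : Filter X}
    {y : K} (hF : F ≤ comap e (𝓝 y)) {x : X} (hx : ClusterPt x F) : e x = y :=
  have hmap : ClusterPt (e x) (map e F) := hx.map he.continuous.continuousAt tendsto_map
  eq_of_nhds_neBot (hmap.mono ((map_mono hF).trans map_comap_le))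

theorem mem_range_of_forall_mem_closure_dissipate [T2Space K] (he : IsInducing e)
    {𝒟 : ℕ → Set (Set X)}
    (hcomplete : ∀ F : Filter X, F.NeBot → (∀ n, ∃ S ∈ 𝒟 n, S ∈ F) → ∃ x : X, ClusterPt x F)
    {σ : ℕ → Set X} (hσ : ∀ i, σ i ∈ 𝒟 i) {y : K}
    (hy : ∀ n, y ∈ closure (e '' dissipate σ n)) : y ∈ range e := by
  set F := comap e (𝓝 y) ⊓ ⨅ n, 𝓟 (dissipate σ n)
  have hbasis : F.HasBasis (fun p : Set K × ℕ => p.1 ∈ 𝓝 y ∧ True)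
      (fun p => e ⁻¹' p.1 ∩ dissipate σ p.2) :=
    ((𝓝 y).basis_sets.comap e).inf (hasBasis_iInf_principal directed_dissipate)
  have hne : F.NeBot := hbasis.neBot_iff.2 fun {p} hp => by
    obtain ⟨_, hU, x, hx, rfl⟩ := mem_closure_iff_nhds.1 (hy p.2) p.1 hp.1
    exact ⟨x, hU, hx⟩
  have hmeets : ∀ n, ∃ S ∈ 𝒟 n, S ∈ F := fun n =>
    ⟨σ n, hσ n, mem_inf_of_right (mem_iInf_of_mem n (mem_principal.2 (dissipate_subset le_rfl)))⟩
  obtain ⟨x, hx⟩ := hcomplete F hne hmeets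
  exact ⟨x, he.eq_of_clusterPt inf_le_left hx⟩

theorem Topology.IsInducing.disjoint_range_closure_inter (he : IsInducing e) {M N : Set X}
    (hM : IsClosed M) (hN : IsClosed N) (hMN : Disjoint M N) :
    Disjoint (range e) (closure (e '' M) ∩ closure (e '' N)) := by
  refine disjoint_left.2 ?_
  rintro _ ⟨x, rfl⟩ ⟨hxM, hxN⟩
  rw [← mem_preimage, he.preimage_closure_image_eq hM] at hxM
  rw [← mem_preimage, he.preimage_closure_image_eq hN] at hxN
  exact disjoint_left.1 hMN hxM hxN

theorem isFsigmaDelta_range [CompactSpace K] (he : IsInducing e) {𝒩 : ℕ → Set (Set X)}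
    (hcount : ∀ n, (𝒩 n).Countable) (hclosed : ∀ n, ∀ N ∈ 𝒩 n, IsClosed N)
    (hcover : ∀ x, ∃ A : ℕ → Set X, Antitone A ∧ ∀ n, A n ∈ 𝒩 n ∧ x ∈ A n)
    (hthread : ∀ A : ℕ → Set X, (∀ n, A n ∈ 𝒩 n) → (∀ m n, (A m ∩ A n).Nonempty) →
      ∀ y, (∀ n, y ∈ closure (e '' A n)) → y ∈ range e) :
    IsFsigmaDelta (range e) := by
  set 𝒮 := ⋃ n, 𝒩 n
  have h𝒮 : 𝒮.Countable := countable_iUnion hcount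
  have h𝒮closed : ∀ N ∈ 𝒮, IsClosed N := fun N hN =>
    let ⟨n, hn⟩ := mem_iUnion.1 hN
    hclosed n N hn
  set pairs := {p : Set X × Set X | p.1 ∈ 𝒮 ∧ p.2 ∈ 𝒮 ∧ Disjoint p.1 p.2}
  set Z : Set X × Set X → Set K := fun p => closure (e '' p.1) ∩ closure (e '' p.2)
  set 𝒢 := range (fun n => ⋃₀ (closure '' (image e '' 𝒩 n))) ∪
    (fun p => avoidingUnion e 𝒮 (Z p)) '' pairs
  have hrange : range e = ⋂₀ 𝒢 := by
    rw [sInter_union, sInter_range, sInter_image]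
    refine (subset_inter ?_ ?_).antisymm ?_
    · rintro _ ⟨x, rfl⟩
      refine mem_iInter.2 fun n => ?_
      obtain ⟨A, -, hA⟩ := hcover x
      exact ⟨_, ⟨_, ⟨A n, (hA n).1, rfl⟩, rfl⟩, subset_closure (mem_image_of_mem e (hA n).2)⟩
    · refine subset_iInter₂ fun p ⟨hp₁, hp₂, hp⟩ => range_subset_avoidingUnion hcover hthread
        (isClosed_closure.inter isClosed_closure) ?_
      exact he.disjoint_range_closure_inter (h𝒮closed _ hp₁) (h𝒮closed _ hp₂) hp
    · rintro y ⟨hplain, hpair⟩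
      exact mem_range_of_forall_mem_avoidingUnion hthread (mem_iInter.1 hplain)
        fun M hM N hN hMN => mem_iInter₂.1 hpair (M, N) ⟨hM, hN, hMN⟩
  rw [hrange]
  refine isFsigmaDelta_sInter_of_isFsigma ((countable_range _).union ?_) ?_
  · exact ((h𝒮.prod h𝒮).mono fun _ hp => mem_prod.2 ⟨hp.1, hp.2.1⟩).image _
  · rintro _ (⟨n, rfl⟩ | ⟨p, -, rfl⟩)
    · exact isFsigma_sUnion_of_isClosed (((hcount n).image _).image _)
        fun _ ⟨_, _, hC⟩ => hC ▸ isClosed_closure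
    · exact isFsigma_avoidingUnion h𝒮 _

end Compactification

theorem fsigmadelta_in_every_compactification_general {X : Type u} [TopologicalSpace X]
    (𝒟 : ℕ → Set (Set X))
    (hcount : ∀ n, (𝒟 n).Countable)
    (hdisj : ∀ n, ∀ s ∈ 𝒟 n, ∀ t ∈ 𝒟 n, s ≠ t → Disjoint s t)
    (hFσ : ∀ n, ∀ s ∈ 𝒟 n, IsFsigma s)
    (hcov : ∀ n, ⋃₀ 𝒟 n = Set.univ)
    (hcomplete : ∀ F : Filter X, F.NeBot → (∀ n, ∃ S ∈ 𝒟 n, S ∈ F) →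
      ∃ x : X, ClusterPt x F)
    (c : Compactification X) :
    ∃ G : ℕ → Set c.space, (∀ n, IsFsigma (G n)) ∧ Set.range c.emb = ⋂ n, G n := by
  choose 𝒜 h𝒜count h𝒜closed h𝒜sub h𝒜cover using
    fun n => exists_countable_closed_refinement (hcount n) (hFσ n)
  refine isFsigmaDelta_range c.isEmbedding.isInducing (countable_partialMeets h𝒜count)
    (fun n _ => isClosed_of_mem_partialMeets h𝒜closed) (fun x => ?_) fun A hA hmeet y hy => ?_
  · have hx : ∀ i, ∃ P ∈ 𝒜 i, x ∈ P := fun i => by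
      rw [← mem_sUnion, h𝒜cover i, hcov i]
      exact mem_univ x
    choose P hP hxP using hx
    exact ⟨dissipate P, antitone_dissipate,
      fun n => ⟨dissipate_mem_partialMeets hP n, mem_dissipate.2 fun i _ => hxP i⟩⟩
  · obtain ⟨σ, hσ, hAσ⟩ := exists_thread_of_pairwise_meet hdisj h𝒜sub hA hmeet
    exact mem_range_of_forall_mem_closure_dissipate c.isEmbedding.isInducing hcomplete hσ
      fun n => closure_mono (image_mono (hAσ n)) (hy n)

/-- Any Tychonoff space admitting a complete sequence of countable disjoint
`F_σ` covers is an `F_{σδ}` set (a countable intersection of `F_σ` sets) in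
every compactification. -/
theorem fsigmadelta_in_every_compactification {X : Type u} [TopologicalSpace X]
    [T35Space X] (𝒟 : ℕ → Set (Set X))
    (hcount : ∀ n, (𝒟 n).Countable)
    (hdisj : ∀ n, ∀ s ∈ 𝒟 n, ∀ t ∈ 𝒟 n, s ≠ t → Disjoint s t)
    (hFσ : ∀ n, ∀ s ∈ 𝒟 n, IsFsigma s)
    (hcov : ∀ n, ⋃₀ 𝒟 n = Set.univ)
    (hcomplete : ∀ F : Filter X, F.NeBot → (∀ n, ∃ S ∈ 𝒟 n, S ∈ F) →
      ∃ x : X, ClusterPt x F)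
    (c : Compactification X) :
    ∃ G : ℕ → Set c.space, (∀ n, IsFsigma (G n)) ∧ Set.range c.emb = ⋂ n, G n :=
  fsigmadelta_in_every_compactification_general 𝒟 hcount hdisj hFσ hcov hcomplete c
end

section
/- Every hereditarily Lindelöf Tychonoff space that is an F_{σδ} subset of some compactification is an F_{σδ} subset of every compactification. -/
/-!
Write `X = ⋂ᵢ ⋃ₖ Fᵢₖ` inside a compactification `bX`, with every `Fᵢₖ` closed. The traces of
the `Fᵢₖ` on `X` form a complete sequence of countable closed covers: an ultrafilter on `X`
containing some `Fᵢₖ` for every `i` converges in `bX` to a point lying in all of them, hence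
to a point of `X`.

Let `cX` be any other compactification and, for a finite sequence `s`, let `D s` be the
closed set `⋂ᵢ Fᵢ,sᵢ ∩ X`. As `X` is hereditarily Lindelöf, `X \ D s` is Lindelöf, so it is
covered by an `F_σ` subset `T s` of `cX` missing the closure of `D s`. Then
`X = ⋂ₛ (T s ∪ ⋃ₖ cl (D (s, k)))`: a point of the right-hand side lies in `cl (D s)` along an
infinite branch, and completeness of the covers makes the ultrafilter it determines on `X`
converge in `X`.
-/


universe u

open Topology

open Set Filter

section Fsigma

variable {Y : Type*} [TopologicalSpace Y]

theorem isFsigma_iff_exists_countable_sUnion {s : Set Y} :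
    IsFsigma s ↔ ∃ S : Set (Set Y), S.Countable ∧ (∀ t ∈ S, IsClosed t) ∧ s = ⋃₀ S := by
  constructor
  · rintro ⟨F, hF, rfl⟩
    exact ⟨range F, countable_range F, forall_mem_range.2 hF, (sUnion_range F).symm⟩
  · rintro ⟨S, hS, hSc, rfl⟩
    -- adding `∅` makes the family nonempty without changing its union
    obtain ⟨F, hF⟩ := (hS.insert ∅).exists_eq_range (insert_nonempty ∅ S)
    refine ⟨F, fun n => ?_, ?_⟩
    · rcases (hF ▸ mem_range_self n : F n ∈ insert ∅ S) with h | h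
      · exact h ▸ isClosed_empty
      · exact hSc _ h
    · rw [← sUnion_range, ← hF, sUnion_insert, empty_union]

theorem IsFsigma.union {s t : Set Y} (hs : IsFsigma s) (ht : IsFsigma t) : IsFsigma (s ∪ t) := by
  obtain ⟨S, hS, hSc, rfl⟩ := isFsigma_iff_exists_countable_sUnion.1 hs
  obtain ⟨T, hT, hTc, rfl⟩ := isFsigma_iff_exists_countable_sUnion.1 ht
  exact isFsigma_iff_exists_countable_sUnion.2
    ⟨S ∪ T, hS.union hT, fun u hu => hu.elim (hSc u) (hTc u), (sUnion_union S T).symm⟩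

theorem isFsigma_iUnion_of_isClosed {F : ℕ → Set Y} (hF : ∀ n, IsClosed (F n)) :
    IsFsigma (⋃ n, F n) :=
  ⟨F, hF, rfl⟩

theorem isFsigmaDelta_iInter {ι : Type*} [Countable ι] [Nonempty ι] {H : ι → Set Y}
    (hH : ∀ i, IsFsigma (H i)) : IsFsigmaDelta (⋂ i, H i) := by
  obtain ⟨f, hf⟩ := exists_surjective_nat ι
  exact ⟨H ∘ f, fun n => hH (f n), (hf.iInter_comp H).symm⟩

theorem IsLindelof.exists_isFsigma_subset_disjoint [RegularSpace Y] {L C : Set Y}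
    (hL : IsLindelof L) (hC : IsClosed C) (hLC : Disjoint L C) :
    ∃ T : Set Y, IsFsigma T ∧ L ⊆ T ∧ Disjoint T C := by
  have hnhds : ∀ x ∈ L, ∃ t ∈ 𝓝 x, IsClosed t ∧ t ⊆ Cᶜ := fun x hx =>
    exists_mem_nhds_isClosed_subset (hC.isOpen_compl.mem_nhds (hLC.notMem_of_mem_left hx))
  choose! t ht htc htC using hnhds
  obtain ⟨r, hr, hrL, hLr⟩ := hL.elim_nhds_subcover t ht
  refine ⟨⋃₀ (t '' r), isFsigma_iff_exists_countable_sUnion.2 ⟨_, hr.image t,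
    forall_mem_image.2 fun x hx => htc x (hrL x hx), rfl⟩, ?_, ?_⟩
  · rwa [sUnion_image]
  · exact subset_compl_iff_disjoint_right.1
      (sUnion_subset (forall_mem_image.2 fun x hx => htC x (hrL x hx)))

end Fsigma

theorem exists_ultrafilter_tendsto_of_mem_closure_image {X K ι : Type*} [TopologicalSpace K]
    [Nonempty ι] {A : ι → Set X} (hA : Directed (· ⊇ ·) A) {e : X → K} {y : K}
    (hy : ∀ i, y ∈ closure (e '' A i)) :
    ∃ U : Ultrafilter X, (∀ i, A i ∈ U) ∧ Tendsto e U (𝓝 y) := by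
  have hne : ∀ i, (comap e (𝓝 y) ⊓ 𝓟 (A i)).NeBot := fun i => by
    rw [inf_principal_neBot_iff]
    rintro _ ⟨V, hV, hVsub⟩
    obtain ⟨_, hyV, x, hx, rfl⟩ := mem_closure_iff_nhds.1 (hy i) V hV
    exact ⟨x, hVsub hyV, hx⟩
  have : (⨅ i, comap e (𝓝 y) ⊓ 𝓟 (A i)).NeBot :=
    iInf_neBot_of_directed'
      (hA.mono_comp (g := fun s => comap e (𝓝 y) ⊓ 𝓟 s) (· ≥ ·)
        fun _ _ hst => inf_le_inf_left _ (principal_mono.2 hst)) hne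
  let U := Ultrafilter.of (⨅ i, comap e (𝓝 y) ⊓ 𝓟 (A i))
  have hU : ∀ i, ↑U ≤ comap e (𝓝 y) ⊓ 𝓟 (A i) := fun i => (Ultrafilter.of_le _).trans (iInf_le _ i)
  obtain ⟨i⟩ := ‹Nonempty ι›
  exact ⟨U, fun j => le_principal_iff.1 ((hU j).trans inf_le_right),
    tendsto_iff_comap.2 ((hU i).trans inf_le_left)⟩

section CompleteCoverSequence

variable {X : Type*} [TopologicalSpace X]

/-- The list is read backwards: its head is the index chosen at level `s.length`, so
`souslinScheme F [kₙ₋₁, …, k₀] = ⋂ i < n, F i kᵢ`. -/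
def souslinScheme (F : ℕ → ℕ → Set X) : List ℕ → Set X
  | [] => univ
  | k :: s => souslinScheme F s ∩ F s.length k

theorem isClosed_souslinScheme {F : ℕ → ℕ → Set X} (hF : ∀ i k, IsClosed (F i k)) :
    ∀ s, IsClosed (souslinScheme F s)
  | [] => isClosed_univ
  | k :: s => (isClosed_souslinScheme hF s).inter (hF _ k)

/-- Frolík's complete sequences of covers. -/
def IsCompleteCoverSequence (F : ℕ → ℕ → Set X) : Prop :=
  ∀ U : Ultrafilter X, (∀ i, ∃ k, F i k ∈ U) → ∃ x, (U : Filter X) ≤ 𝓝 x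

theorem isCompleteCoverSequence_preimage {K : Type*} [TopologicalSpace K] [CompactSpace K]
    {e : X → K} (he : IsInducing e) {F : ℕ → ℕ → Set K} (hF : ∀ i k, IsClosed (F i k))
    (hrange : ⋂ i, ⋃ k, F i k ⊆ range e) :
    IsCompleteCoverSequence fun i k => e ⁻¹' F i k := by
  intro U hU
  have hlim : ∀ i, ∃ k, (U.map e).lim ∈ F i k := fun i =>
    (hU i).imp fun k hk => (hF i k).mem_of_tendsto (U.map e).le_nhds_lim hk
  obtain ⟨x, hx⟩ := hrange (mem_iInter.2 fun i => mem_iUnion.2 (hlim i))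
  refine ⟨x, ?_⟩
  rw [he.nhds_eq_comap, hx]
  exact map_le_iff_le_comap.1 (U.map e).le_nhds_lim

theorem IsCompleteCoverSequence.mem_range_of_mem_closure_souslinScheme
    {F : ℕ → ℕ → Set X} (hF : IsCompleteCoverSequence F) {K : Type*} [TopologicalSpace K]
    [T2Space K] {e : X → K} (he : Continuous e) {y : K} (hy : y ∈ closure (range e))
    (hstep : ∀ s, y ∈ closure (e '' souslinScheme F s) →
      ∃ k, y ∈ closure (e '' souslinScheme F (k :: s))) :
    y ∈ range e := by
  choose! next hnext using hstep
  let branch : ℕ → List ℕ := fun n => Nat.rec [] (fun _ s => next s :: s) n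
  have hbranch : ∀ n, y ∈ closure (e '' souslinScheme F (branch n)) := by
    intro n
    induction n with
    | zero => simpa [branch, souslinScheme] using hy
    | succ n ih => exact hnext _ ih
  have hlength : ∀ n, (branch n).length = n := by
    intro n
    induction n with
    | zero => rfl
    | succ n ih => simp [branch, ih]
  have hanti : Antitone fun n => souslinScheme F (branch n) :=
    antitone_nat_of_succ_le fun n => inter_subset_left
  obtain ⟨U, hU, hUy⟩ := exists_ultrafilter_tendsto_of_mem_closure_image hanti.directed_ge hbranch
  obtain ⟨x, hx⟩ := hF U fun i => ⟨next (branch i),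
    mem_of_superset (hU (i + 1)) (inter_subset_right.trans (by rw [hlength]))⟩
  exact ⟨x, tendsto_nhds_unique ((he.tendsto x).mono_left hx) hUy⟩

theorem isFsigmaDelta_range_of_isCompleteCoverSequence [HereditarilyLindelofSpace X]
    {F : ℕ → ℕ → Set X} (hF : ∀ i k, IsClosed (F i k)) (hcover : ∀ i x, ∃ k, x ∈ F i k)
    (hcomplete : IsCompleteCoverSequence F) {K : Type*} [TopologicalSpace K] [T3Space K]
    {e : X → K} (he : IsEmbedding e) (hdense : DenseRange e) :
    IsFsigmaDelta (range e) := by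
  set D := souslinScheme F
  have hsep : ∀ s, ∃ T, IsFsigma T ∧ e '' (D s)ᶜ ⊆ T ∧ Disjoint T (closure (e '' D s)) := by
    refine fun s => ((HereditarilyLindelofSpace.isLindelof _).image he.continuous)
      |>.exists_isFsigma_subset_disjoint isClosed_closure ?_
    refine disjoint_left.2 ?_
    rintro _ ⟨x, hx, rfl⟩ hxcl
    have hxD : x ∈ closure (D s) := by rwa [he.closure_eq_preimage_closure_image]
    exact hx ((isClosed_souslinScheme hF s).closure_subset hxD)
  choose T hT hDT hTD using hsep
  have hrange : range e = ⋂ s, (T s ∪ ⋃ k, closure (e '' D (k :: s))) := by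
    refine subset_antisymm ?_ fun y hy => ?_
    · rintro _ ⟨x, rfl⟩
      refine mem_iInter.2 fun s => ?_
      by_cases hx : x ∈ D s
      · obtain ⟨k, hk⟩ := hcover s.length x
        exact Or.inr (mem_iUnion.2 ⟨k, subset_closure (mem_image_of_mem e ⟨hx, hk⟩)⟩)
      · exact Or.inl (hDT s (mem_image_of_mem e hx))
    · refine hcomplete.mem_range_of_mem_closure_souslinScheme he.continuous
        (hdense.closure_range ▸ mem_univ y) fun s hs => mem_iUnion.1 ?_
      exact (mem_iInter.1 hy s).resolve_left fun hyT => (hTD s).notMem_of_mem_left hyT hs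
  rw [hrange]
  exact isFsigmaDelta_iInter fun s =>
    (hT s).union (isFsigma_iUnion_of_isClosed fun _ => isClosed_closure)

end CompleteCoverSequence

theorem hereditarilyLindelof_absolute_fsigmadelta_general {X : Type u} [TopologicalSpace X]
    [HereditarilyLindelofSpace X]
    (h : ∃ c : Compactification X, ∃ G : ℕ → Set c.space,
      (∀ n, IsFsigma (G n)) ∧ Set.range c.emb = ⋂ n, G n) :
    ∀ c : Compactification X, ∃ G : ℕ → Set c.space,
      (∀ n, IsFsigma (G n)) ∧ Set.range c.emb = ⋂ n, G n := by
  obtain ⟨c₀, G, hG, hrange⟩ := h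
  choose F hF hGF using hG
  have hrange' : range c₀.emb = ⋂ i, ⋃ k, F i k := by simp only [hrange, hGF]
  intro c
  exact isFsigmaDelta_range_of_isCompleteCoverSequence
    (fun i k => (hF i k).preimage c₀.isEmbedding.continuous)
    (fun i x => (mem_iUnion.1 (mem_iInter.1 (hrange'.le (mem_range_self x)) i) :))
    (isCompleteCoverSequence_preimage c₀.isEmbedding.isInducing hF hrange'.ge)
    c.isEmbedding c.dense

/-- A hereditarily Lindelöf Tychonoff space which is an `F_{σδ}` subset
(a countable intersection of `F_σ` sets) of some compactification is an
`F_{σδ}` subset of every compactification. -/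
theorem hereditarilyLindelof_absolute_fsigmadelta {X : Type u} [TopologicalSpace X]
    [T35Space X] [HereditarilyLindelofSpace X]
    (h : ∃ c : Compactification X, ∃ G : ℕ → Set c.space,
      (∀ n, IsFsigma (G n)) ∧ Set.range c.emb = ⋂ n, G n) :
    ∀ c : Compactification X, ∃ G : ℕ → Set c.space,
      (∀ n, IsFsigma (G n)) ∧ Set.range c.emb = ⋂ n, G n :=
  hereditarilyLindelof_absolute_fsigmadelta_general h
end

section
/- Let X be a separable metrizable space and cX any compactification of X. Then there exists a metrizable compactification dX of X with dX ⪯ cX (i.e., cX maps continuously onto dX restricting to the identity on X). -/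
universe u

open Topology TopologicalSpace

/-!
Choose a countable base `B` of `X` and, for each `V ∈ B`, an open `O V` of `c.space` tracing `V`.
For the countably many pairs `U, V ∈ B` with `closure (emb U) ⊆ O V`, Urysohn's lemma gives
`f : c.space → [0, 1]` vanishing on `emb U` and equal to `1` off `O V`; by regularity these pairs
cover every `V`, so the countably many `f` induce the topology of `X`. The product map
`c.space → ℝ^ι`, `ι` countable, is then continuous, embeds `X`, and its compact image is a
metrizable compactification of `X` below `c`.
-/

open Set Filter

theorem TopologicalSpace.IsTopologicalBasis.exists_mem_closure_image_subset {X Y : Type*}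
    [TopologicalSpace X] [TopologicalSpace Y] [RegularSpace Y] {B : Set (Set X)}
    (hB : IsTopologicalBasis B)
    {e : X → Y} (he : Continuous e) {x : X} {O : Set Y} (hO : O ∈ 𝓝 (e x)) :
    ∃ U ∈ B, x ∈ U ∧ closure (e '' U) ⊆ O := by
  obtain ⟨W, ⟨hW, hWc⟩, hWO⟩ := (closed_nhds_basis (e x)).mem_iff.1 hO
  obtain ⟨U, hUB, hxU, hUW⟩ := hB.mem_nhds_iff.1 (he.continuousAt.preimage_mem_nhds hW)
  exact ⟨U, hUB, hxU, (closure_minimal (image_subset_iff.2 hUW) hWc).trans hWO⟩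

theorem Topology.IsInducing.exists_countable_continuousMap_isInducing {X : Type u} {Y : Type*}
    [TopologicalSpace X] [SecondCountableTopology X] [TopologicalSpace Y] [NormalSpace Y]
    [RegularSpace Y]
    {e : X → Y} (he : IsInducing e) :
    ∃ (ι : Type u) (_ : Countable ι) (f : ι → C(Y, ℝ)), IsInducing fun x i => f i (e x) := by
  obtain ⟨B, hBc, -, hB⟩ := exists_countable_basis X
  have : ∀ V ∈ B, ∃ O, IsOpen O ∧ e ⁻¹' O = V := fun V hV => he.isOpen_iff.1 (hB.isOpen hV)
  choose! O hO hOV using this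
  let s : Set (Set X × Set X) := {p | p.1 ∈ B ∧ p.2 ∈ B ∧ closure (e '' p.1) ⊆ O p.2}
  have hs : s.Countable := (hBc.prod hBc).mono fun _ hp => mk_mem_prod hp.1 hp.2.1
  have : ∀ p : s, ∃ f : C(Y, ℝ), EqOn f 0 (closure (e '' p.1.1)) ∧ EqOn f 1 (O p.1.2)ᶜ := by
    rintro ⟨⟨U, V⟩, -, hVB, hUV⟩
    obtain ⟨f, hf0, hf1, -⟩ := exists_continuous_zero_one_of_isClosed isClosed_closure
      (hO V hVB).isClosed_compl (disjoint_compl_right.mono_left hUV)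
    exact ⟨f, hf0, hf1⟩
  choose f hf0 hf1 using this
  refine ⟨s, hs.to_subtype, f, isInducing_iff_nhds.2 fun x => le_antisymm ?_ ?_⟩
  · exact tendsto_iff_comap.1 (by fun_prop : Continuous fun x i => f i (e x)).continuousAt
  refine hB.nhds_hasBasis.ge_iff.2 fun V ⟨hVB, hxV⟩ => ?_
  obtain ⟨U, hUB, hxU, hUV⟩ := hB.exists_mem_closure_image_subset he.continuous
    ((hO V hVB).mem_nhds (by rwa [← hOV V hVB] at hxV))
  let p : s := ⟨(U, V), hUB, hVB, hUV⟩
  refine ⟨{φ | φ p < 1}, (isOpen_lt (continuous_apply p) continuous_const).mem_nhds ?_, ?_⟩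
  · simp [hf0 p (subset_closure (mem_image_of_mem e hxU))]
  · intro y hy
    rw [← hOV V hVB]
    by_contra hyV
    simp [hf1 p hyV] at hy

namespace Compactification

variable {X : Type u} [TopologicalSpace X]

def ofRange (c : Compactification X) {Y : Type u} [TopologicalSpace Y] [T2Space Y]
    {g : c.space → Y} (hg : Continuous g) (he : IsEmbedding (g ∘ c.emb)) :
    Compactification X where
  space := range g
  compact := isCompact_iff_compactSpace.1 (isCompact_range hg)
  emb := rangeFactorization g ∘ c.emb
  isEmbedding := he.codRestrict _ _
  dense := rangeFactorization_surjective.denseRange.comp c.dense hg.rangeFactorization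

instance (c : Compactification X) {Y : Type u} [TopologicalSpace Y] [T2Space Y]
    [MetrizableSpace Y] {g : c.space → Y} (hg : Continuous g) (he : IsEmbedding (g ∘ c.emb)) :
    MetrizableSpace (c.ofRange hg he).space :=
  inferInstanceAs (MetrizableSpace (range g))

end Compactification

/-- Let `X` be a separable metrizable space and `cX` any compactification of
`X`.  Then there is a metrizable compactification `dX` of `X` with `dX ⪯ cX`,
i.e. `cX` maps continuously onto `dX` commuting with the embeddings of `X`. -/
theorem exists_metrizable_smaller_compactification {X : Type u} [TopologicalSpace X]
    [SeparableSpace X] [MetrizableSpace X] (c : Compactification X) :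
    ∃ d : Compactification X, MetrizableSpace d.space ∧
      ∃ f : c.space → d.space, Continuous f ∧ ∀ x : X, f (c.emb x) = d.emb x := by
  let := metrizableSpaceMetric X
  have := UniformSpace.secondCountable_of_separable X
  obtain ⟨ι, _, f, hf⟩ := c.isEmbedding.isInducing.exists_countable_continuousMap_isInducing
  have hg : Continuous fun y i => f i y := by fun_prop
  exact ⟨c.ofRange hg hf.isEmbedding, inferInstance, _, hg.rangeFactorization, fun _ => rfl⟩
end

section
/- For each countable ordinal α ≤ ω₁, the 'maximal' tree T_α of height α satisfies r_l(T_α) = α and r_i(T_α) = α, where r_l is the leaf-rank and r_i the infinite-branching rank. -/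
open scoped Ordinal

/-- The leaf derivative: those `t ∈ T` having a proper extension in `T`. -/
def derivL (T : Set (List ℕ)) : Set (List ℕ) :=
  {t ∈ T | ∃ s ∈ T, t <+: s ∧ s ≠ t}

/-- The infinite-branching derivative: those `t ∈ T` having infinitely many
extensions in `T`. -/
def derivI (T : Set (List ℕ)) : Set (List ℕ) :=
  {t ∈ T | {s ∈ T | t <+: s}.Infinite}

/-- Iterates of a derivative `D` on sets of finite sequences. -/
noncomputable def iterDeriv (D : Set (List ℕ) → Set (List ℕ)) (T : Set (List ℕ))
    (α : Ordinal) : Set (List ℕ) :=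
  Ordinal.limitRecOn α T (fun _ ih => D ih)
    (fun o _ ih => ⋂ β : Set.Iio o, ih β.1 β.2)

open Classical in
/-- The rank associated to a derivative `D`: the least `α` with
`D^{α+1}(T) = ∅`, and `ω₁` if there is no such `α`. -/
noncomputable def rankOf (D : Set (List ℕ) → Set (List ℕ)) (T : Set (List ℕ)) : Ordinal :=
  if _ : ∃ α : Ordinal.{0}, iterDeriv D T (α + 1) = ∅ then
    sInf {α : Ordinal.{0} | iterDeriv D T (α + 1) = ∅}
  else ω₁

/-- The `maximal' trees `T_α` of height `α < ω₁`, built from a fixed choice of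
bijections `π lam : ω → lam` for countable limit ordinals `lam`:
`T₀ = {∅}`, `T_{α+1} = {∅} ∪ ⋃_j j⌢T_α`, and
`T_lam = {∅} ∪ ⋃_j j⌢T_{π lam j}` for limit `lam`. -/
noncomputable def Ttree (π : Ordinal.{0} → ℕ → Ordinal.{0}) (α : Ordinal.{0}) :
    Set (List ℕ) :=
  Ordinal.limitRecOn α {([] : List ℕ)}
    (fun _ ih => {([] : List ℕ)} ∪ ⋃ j : ℕ, (fun t => j :: t) '' ih)
    (fun lam _ ih => {([] : List ℕ)} ∪
      ⋃ j : ℕ, (fun t => j :: t) '' (if h : π lam j < lam then ih (π lam j) h else ∅))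

/-- The trees `T_α` for `α ≤ ω₁`, with `T_{ω₁} := ω^{<ω}`. -/
noncomputable def Tmax (π : Ordinal.{0} → ℕ → Ordinal.{0}) (α : Ordinal.{0}) :
    Set (List ℕ) :=
  if α < ω₁ then Ttree π α else Set.univ

/-!
Both derivatives commute with "coning": if `U : ℕ → Set (List ℕ)` has infinitely many nonempty
members, then `D ({[]} ∪ ⋃ j, j⌢U j) = {[]} ∪ ⋃ j, j⌢D (U j)`. By transfinite induction this
persists through the iterates `D^β` as long as infinitely many `D^δ (U j)`, `δ < β`, are nonempty.
For `T_α` this holds up to `β = α`, which leaves exactly the root: `D^α (T_α) = {[]}`, so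
`D^{α+1} (T_α) = ∅` and the rank is `α`. At a limit `λ` the infinitude comes from `π λ` being onto
`λ`. Finally `ω^{<ω}` is a fixed point of both derivatives, so its rank is `ω₁`.
-/

section IterDeriv

variable {D : Set (List ℕ) → Set (List ℕ)} {T : Set (List ℕ)}

theorem iterDeriv_zero : iterDeriv D T 0 = T :=
  Ordinal.limitRecOn_zero ..

theorem iterDeriv_add_one (α : Ordinal) : iterDeriv D T (α + 1) = D (iterDeriv D T α) :=
  Ordinal.limitRecOn_add_one ..

theorem iterDeriv_limit {o : Ordinal} (ho : Order.IsSuccLimit o) :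
    iterDeriv D T o = ⋂ β : Set.Iio o, iterDeriv D T β :=
  Ordinal.limitRecOn_limit _ _ _ _ ho

theorem iterDeriv_antitone (hD : ∀ T, D T ⊆ T) : Antitone (iterDeriv D T) := by
  intro β γ hβγ
  induction γ using Ordinal.limitRecOn with
  | zero => rw [nonpos_iff_eq_zero.mp hβγ]
  | add_one γ ih =>
    rcases hβγ.lt_or_eq with hlt | rfl
    · rw [iterDeriv_add_one]
      exact (hD _).trans (ih (Order.lt_add_one_iff.mp hlt))
    · rfl
  | limit γ hγ ih =>
    rcases hβγ.lt_or_eq with hlt | rfl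
    · rw [iterDeriv_limit hγ]
      exact Set.iInter_subset_of_subset ⟨β, hlt⟩ subset_rfl
    · rfl

theorem iterDeriv_univ (hD : D Set.univ = Set.univ) (β : Ordinal) :
    iterDeriv D Set.univ β = Set.univ := by
  induction β using Ordinal.limitRecOn with
  | zero => exact iterDeriv_zero
  | add_one β ih => rw [iterDeriv_add_one, ih, hD]
  | limit β hβ ih => rw [iterDeriv_limit hβ, Set.iInter_eq_univ]; exact fun γ => ih γ γ.2

theorem rankOf_eq_of_iterDeriv_eq_singleton (hD : ∀ T, D T ⊆ T) (hnil : D {[]} = ∅)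
    {α : Ordinal.{0}} (h : iterDeriv D T α = {[]}) : rankOf D T = α := by
  have hα : iterDeriv D T (α + 1) = ∅ := by rw [iterDeriv_add_one, h, hnil]
  have hmin : ∀ β ∈ {β : Ordinal.{0} | iterDeriv D T (β + 1) = ∅}, α ≤ β := by
    intro β hβ
    by_contra! hβα
    have := iterDeriv_antitone (T := T) hD (Order.add_one_le_of_lt hβα)
    rw [h, hβ] at this
    exact this rfl
  rw [rankOf, dif_pos ⟨α, hα⟩]
  exact IsLeast.csInf_eq ⟨hα, hmin⟩

theorem rankOf_univ (hD : D Set.univ = Set.univ) : rankOf D Set.univ = ω₁ := by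
  rw [rankOf, dif_neg]
  rintro ⟨α, hα⟩
  rw [iterDeriv_univ hD] at hα
  exact Set.empty_ne_univ hα.symm

end IterDeriv

def cone (U : ℕ → Set (List ℕ)) : Set (List ℕ) :=
  {[]} ∪ ⋃ j : ℕ, (fun t => j :: t) '' U j

@[simp]
theorem nil_mem_cone (U : ℕ → Set (List ℕ)) : [] ∈ cone U :=
  Or.inl rfl

@[simp]
theorem cons_mem_cone {U : ℕ → Set (List ℕ)} {j : ℕ} {t : List ℕ} :
    j :: t ∈ cone U ↔ t ∈ U j := by
  simp [cone]

theorem cone_empty : cone (fun _ => ∅) = {[]} := by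
  simp [cone]

def CommutesWithCone (D : Set (List ℕ) → Set (List ℕ)) : Prop :=
  ∀ U : ℕ → Set (List ℕ), {j | (U j).Nonempty}.Infinite → D (cone U) = cone (D ∘ U)

theorem iInter_cone {ι : Type*} [Nonempty ι] (U : ι → ℕ → Set (List ℕ)) :
    ⋂ i, cone (U i) = cone (fun j => ⋂ i, U i j) := by
  ext (_ | ⟨j, t⟩) <;> simp

theorem Ttree_zero (π : Ordinal.{0} → ℕ → Ordinal.{0}) : Ttree π 0 = {[]} :=
  Ordinal.limitRecOn_zero ..

theorem Ttree_add_one (π : Ordinal.{0} → ℕ → Ordinal.{0}) (α : Ordinal.{0}) :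
    Ttree π (α + 1) = cone (fun _ => Ttree π α) :=
  Ordinal.limitRecOn_add_one ..

theorem Ttree_limit {π : Ordinal.{0} → ℕ → Ordinal.{0}} {lam : Ordinal.{0}}
    (hlam : Order.IsSuccLimit lam) (hπ : ∀ j, π lam j < lam) :
    Ttree π lam = cone (fun j => Ttree π (π lam j)) := by
  rw [Ttree, Ordinal.limitRecOn_limit _ _ _ _ hlam]
  simp only [hπ, dite_true]
  rfl

section Cone

variable {D : Set (List ℕ) → Set (List ℕ)}

theorem iterDeriv_cone (hD : CommutesWithCone D) {U : ℕ → Set (List ℕ)} {β : Ordinal}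
    (hU : ∀ δ < β, {j | (iterDeriv D (U j) δ).Nonempty}.Infinite) :
    iterDeriv D (cone U) β = cone (fun j => iterDeriv D (U j) β) := by
  induction β using Ordinal.limitRecOn with
  | zero => simp only [iterDeriv_zero]
  | add_one β ih =>
    have hβ := lt_add_one β
    rw [iterDeriv_add_one, ih fun δ hδ => hU δ (hδ.trans hβ), hD _ (hU β hβ)]
    simp only [Function.comp_def, iterDeriv_add_one]
  | limit β hβ ih =>
    have : Nonempty (Set.Iio β) := ⟨⟨0, hβ.bot_lt⟩⟩
    simp only [iterDeriv_limit hβ]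
    rw [← iInter_cone]
    exact Set.iInter_congr fun δ => ih δ δ.2 fun γ hγ => hU γ (hγ.trans δ.2)

theorem iterDeriv_cone_eq_singleton (hsub : ∀ T, D T ⊆ T) (hnil : D {[]} = ∅)
    (hD : CommutesWithCone D) {U : ℕ → Set (List ℕ)} {b : ℕ → Ordinal} {α : Ordinal}
    (hUb : ∀ j, iterDeriv D (U j) (b j) = {[]}) (hbα : ∀ j, b j < α)
    (hb : ∀ δ < α, {j | δ ≤ b j}.Infinite) :
    iterDeriv D (cone U) α = {[]} := by
  have hU : ∀ δ < α, {j | (iterDeriv D (U j) δ).Nonempty}.Infinite := fun δ hδ =>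
    (hb δ hδ).mono fun j hj => ⟨[], iterDeriv_antitone hsub hj (by rw [hUb j]; rfl)⟩
  have hempty : ∀ j, iterDeriv D (U j) α = ∅ := fun j =>
    Set.subset_empty_iff.mp <| by
      simpa [iterDeriv_add_one, hUb j, hnil] using
        iterDeriv_antitone (T := U j) hsub (Order.add_one_le_of_lt (hbα j))
  rw [iterDeriv_cone hD hU, funext hempty, cone_empty]

end Cone

theorem infinite_setOf_le_of_Iio_subset_range {f : ℕ → Ordinal} {lam δ : Ordinal}
    (hlam : Order.IsSuccLimit lam) (hf : Set.Iio lam ⊆ Set.range f) (hδ : δ < lam) :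
    {j | δ ≤ f j}.Infinite := by
  have hIco : (Set.Ico δ lam).Infinite :=
    Set.infinite_of_injective_forall_mem (f := fun n : ℕ => δ + n)
      (fun m n hmn => Nat.cast_injective (add_left_cancel hmn))
      fun n => ⟨le_self_add, hlam.add_natCast_lt hδ n⟩
  exact (hIco.preimage fun β hβ => hf hβ.2).mono fun j hj => hj.1

theorem iterDeriv_Ttree {D : Set (List ℕ) → Set (List ℕ)} (hsub : ∀ T, D T ⊆ T)
    (hnil : D {[]} = ∅) (hD : CommutesWithCone D)
    {π : Ordinal.{0} → ℕ → Ordinal.{0}}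
    (hπ : ∀ lam : Ordinal.{0}, Order.IsSuccLimit lam → lam < ω₁ →
      (∀ j : ℕ, π lam j < lam) ∧ Set.Iio lam ⊆ Set.range (π lam))
    {α : Ordinal.{0}} (hα : α < ω₁) :
    iterDeriv D (Ttree π α) α = {[]} := by
  induction α using Ordinal.limitRecOn with
  | zero => rw [iterDeriv_zero, Ttree_zero]
  | add_one α ih =>
    rw [Ttree_add_one]
    refine iterDeriv_cone_eq_singleton hsub hnil hD (fun _ => ih ((lt_add_one α).trans hα))
      (fun _ => lt_add_one α) fun δ hδ => ?_
    simpa [Order.le_of_lt_succ hδ] using Set.infinite_univ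
  | limit α hlim ih =>
    obtain ⟨hπα, hsurj⟩ := hπ α hlim hα
    rw [Ttree_limit hlim hπα]
    exact iterDeriv_cone_eq_singleton hsub hnil hD (fun j => ih _ (hπα j) ((hπα j).trans hα)) hπα
      fun δ => infinite_setOf_le_of_Iio_subset_range hlim hsurj

theorem derivL_subset (T : Set (List ℕ)) : derivL T ⊆ T :=
  Set.sep_subset _ _

theorem derivL_singleton_nil : derivL {[]} = ∅ := by
  ext t
  simp only [derivL, Set.mem_singleton_iff, Set.mem_empty_iff_false, iff_false]
  rintro ⟨rfl, s, rfl, -, hne⟩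
  exact hne rfl

theorem derivL_univ : derivL Set.univ = Set.univ :=
  Set.eq_univ_of_forall fun t => ⟨trivial, t ++ [0], trivial, List.prefix_append t [0], by simp⟩

theorem derivL_cone {U : ℕ → Set (List ℕ)} (hU : ∃ j, (U j).Nonempty) :
    derivL (cone U) = cone (derivL ∘ U) := by
  ext (_ | ⟨j, t⟩)
  · obtain ⟨j, t, ht⟩ := hU
    simpa [derivL] using ⟨j :: t, cons_mem_cone.mpr ht, by simp⟩
  · simp only [derivL, Set.mem_sep_iff, cons_mem_cone, Function.comp_apply]
    constructor
    · rintro ⟨ht, _ | ⟨j', s⟩, hs, hpre, hne⟩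
      · exact absurd (List.prefix_nil.mp hpre) (List.cons_ne_nil j t)
      · obtain ⟨rfl, hpre'⟩ := List.cons_prefix_cons.mp hpre
        exact ⟨ht, s, cons_mem_cone.mp hs, hpre', fun hst => hne (by rw [hst])⟩
    · rintro ⟨ht, s, hs, hpre, hne⟩
      exact ⟨ht, j :: s, cons_mem_cone.mpr hs, List.cons_prefix_cons.mpr ⟨rfl, hpre⟩,
        by simpa using hne⟩

theorem commutesWithCone_derivL : CommutesWithCone derivL :=
  fun _ hU => derivL_cone hU.nonempty

theorem derivI_subset (T : Set (List ℕ)) : derivI T ⊆ T :=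
  Set.sep_subset _ _

theorem derivI_singleton_nil : derivI {[]} = ∅ :=
  Set.eq_empty_of_forall_notMem fun _ ht =>
    ht.2 ((Set.finite_singleton []).subset fun _ hs => hs.1)

theorem derivI_univ : derivI Set.univ = Set.univ :=
  Set.eq_univ_of_forall fun t => ⟨trivial,
    Set.infinite_of_injective_forall_mem (f := fun n : ℕ => t ++ [n])
      (fun m n hmn => by simpa using hmn) fun n => ⟨trivial, List.prefix_append t [n]⟩⟩

theorem cone_infinite {U : ℕ → Set (List ℕ)} (hU : {j | (U j).Nonempty}.Infinite) :
    (cone U).Infinite := by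
  refine (hU.mono ?_).of_image List.headI
  rintro j ⟨t, ht⟩
  exact ⟨j :: t, cons_mem_cone.mpr ht, rfl⟩

theorem setOf_cons_prefix_cone (U : ℕ → Set (List ℕ)) (j : ℕ) (t : List ℕ) :
    {s ∈ cone U | j :: t <+: s} = (fun s => j :: s) '' {s ∈ U j | t <+: s} := by
  ext (_ | ⟨j', s⟩)
  · simp
  · simp only [Set.mem_sep_iff, cons_mem_cone, List.cons_prefix_cons, Set.mem_image,
      List.cons.injEq]
    constructor
    · rintro ⟨hs, rfl, hpre⟩
      exact ⟨s, ⟨hs, hpre⟩, rfl, rfl⟩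
    · rintro ⟨s, ⟨hs, hpre⟩, rfl, rfl⟩
      exact ⟨hs, rfl, hpre⟩

theorem derivI_cone {U : ℕ → Set (List ℕ)} (hU : {j | (U j).Nonempty}.Infinite) :
    derivI (cone U) = cone (derivI ∘ U) := by
  ext (_ | ⟨j, t⟩)
  · simpa [derivI] using cone_infinite hU
  · simp only [derivI, Set.mem_sep_iff, cons_mem_cone, Function.comp_apply,
      setOf_cons_prefix_cone, Set.infinite_image_iff List.cons_injective.injOn]

theorem commutesWithCone_derivI : CommutesWithCone derivI :=
  fun _ => derivI_cone

/-- For each `α ≤ ω₁`, the maximal tree `T_α` of height `α` has leaf-rank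
`r_l(T_α) = α` and infinite-branching rank `r_i(T_α) = α`. -/
theorem rank_Tmax (π : Ordinal.{0} → ℕ → Ordinal.{0})
    (hπ : ∀ lam : Ordinal.{0}, Order.IsSuccLimit lam → lam < ω₁ →
      (∀ j : ℕ, π lam j < lam) ∧ ∀ β < lam, ∃! j : ℕ, π lam j = β) :
    ∀ α ≤ ω₁, rankOf derivL (Tmax π α) = α ∧ rankOf derivI (Tmax π α) = α := by
  have hπ' : ∀ lam : Ordinal.{0}, Order.IsSuccLimit lam → lam < ω₁ →
      (∀ j, π lam j < lam) ∧ Set.Iio lam ⊆ Set.range (π lam) :=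
    fun lam hlim hlam => (hπ lam hlim hlam).imp_right fun hsurj β hβ => (hsurj β hβ).exists
  intro α hα
  rcases hα.lt_or_eq with hlt | rfl
  · rw [Tmax, if_pos hlt]
    exact ⟨rankOf_eq_of_iterDeriv_eq_singleton derivL_subset derivL_singleton_nil
        (iterDeriv_Ttree derivL_subset derivL_singleton_nil commutesWithCone_derivL hπ' hlt),
      rankOf_eq_of_iterDeriv_eq_singleton derivI_subset derivI_singleton_nil
        (iterDeriv_Ttree derivI_subset derivI_singleton_nil commutesWithCone_derivI hπ' hlt)⟩
  · rw [Tmax, if_neg (lt_irrefl _)]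
    exact ⟨rankOf_univ derivL_univ, rankOf_univ derivI_univ⟩
end

section
/- Let X be an F-Borel subset of a topological space Y (i.e., X ∈ ℱ_α(Y) for some α < ω₁). Then for every y ∈ Y \ X there is a G_δ subset G of Y with y ∈ G ⊆ Y \ X. -/
open scoped Ordinal

/-- An ordinal is even if it equals `lam + 2n` with `lam` limit or zero. -/
def EvenOrd (α : Ordinal.{0}) : Prop :=
  ∃ (lam : Ordinal.{0}) (n : ℕ), (Order.IsSuccLimit lam ∨ lam = 0) ∧ α = lam + (2 * n : ℕ)

/-- An ordinal is odd if it equals `lam + (2n+1)` with `lam` limit or zero. -/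
def OddOrd (α : Ordinal.{0}) : Prop :=
  ∃ (lam : Ordinal.{0}) (n : ℕ), (Order.IsSuccLimit lam ∨ lam = 0) ∧ α = lam + (2 * n + 1 : ℕ)

open Classical in
/-- The `ℱ`-Borel hierarchy on `Y`: `ℱ₀` is the class of closed sets; for
`α > 0`, `ℱ_α` consists of countable unions (odd `α`) or countable
intersections (even `α`) of sets from the classes `ℱ_β`, `β < α`. -/
noncomputable def Fclass (Y : Type*) [TopologicalSpace Y] : Ordinal.{0} → Set (Set Y) :=
  (wellFounded_lt (α := Ordinal.{0})).fix fun α ih =>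
    if α = 0 then {s | IsClosed s}
    else if OddOrd α then
      {s | ∃ f : ℕ → Set Y,
        (∀ n, ∃ β : {b : Ordinal.{0} // b < α}, f n ∈ ih β.1 β.2) ∧ s = ⋃ n, f n}
    else
      {s | ∃ f : ℕ → Set Y,
        (∀ n, ∃ β : {b : Ordinal.{0} // b < α}, f n ∈ ih β.1 β.2) ∧ s = ⋂ n, f n}

section UnionOfGδ

variable {Y : Type*} [TopologicalSpace Y]

def IsUnionOfGδ (s : Set Y) : Prop :=
  ∀ y ∈ s, ∃ G : Set Y, IsGδ G ∧ y ∈ G ∧ G ⊆ s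

theorem IsOpen.isUnionOfGδ {s : Set Y} (hs : IsOpen s) : IsUnionOfGδ s :=
  fun _ hy => ⟨s, hs.isGδ, hy, subset_rfl⟩

theorem IsUnionOfGδ.iUnion {ι : Sort*} {t : ι → Set Y} (ht : ∀ i, IsUnionOfGδ (t i)) :
    IsUnionOfGδ (⋃ i, t i) := by
  intro y hy
  obtain ⟨i, hyi⟩ := Set.mem_iUnion.1 hy
  obtain ⟨G, hG, hyG, hGt⟩ := ht i y hyi
  exact ⟨G, hG, hyG, hGt.trans (Set.subset_iUnion t i)⟩

theorem IsUnionOfGδ.iInter {ι : Sort*} [Countable ι] {t : ι → Set Y}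
    (ht : ∀ i, IsUnionOfGδ (t i)) : IsUnionOfGδ (⋂ i, t i) := by
  intro y hy
  choose G hG hyG hGt using fun i => ht i y (Set.mem_iInter.1 hy i)
  exact ⟨⋂ i, G i, .iInter hG, Set.mem_iInter.2 hyG, Set.iInter_mono hGt⟩

end UnionOfGδ

open Classical in
theorem Fclass_eq (Y : Type*) [TopologicalSpace Y] (α : Ordinal.{0}) :
    Fclass Y α = if α = 0 then {s | IsClosed s}
    else if OddOrd α then
      {s | ∃ f : ℕ → Set Y,
        (∀ n, ∃ β : {b : Ordinal.{0} // b < α}, f n ∈ Fclass Y β.1) ∧ s = ⋃ n, f n}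
    else
      {s | ∃ f : ℕ → Set Y,
        (∀ n, ∃ β : {b : Ordinal.{0} // b < α}, f n ∈ Fclass Y β.1) ∧ s = ⋂ n, f n} :=
  WellFounded.fix_eq _ _ _

theorem isUnionOfGδ_compl_of_mem_Fclass {Y : Type*} [TopologicalSpace Y] (α : Ordinal.{0})
    {X : Set Y} (hX : X ∈ Fclass Y α) : IsUnionOfGδ Xᶜ := by
  induction α using WellFoundedLT.induction generalizing X with
  | _ α ih =>
  rw [Fclass_eq] at hX
  split_ifs at hX
  · exact hX.isOpen_compl.isUnionOfGδ
  · obtain ⟨f, hf, rfl⟩ := hX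
    rw [Set.compl_iUnion]
    exact .iInter fun n => let ⟨β, hβ⟩ := hf n; ih β.1 β.2 hβ
  · obtain ⟨f, hf, rfl⟩ := hX
    rw [Set.compl_iInter]
    exact .iUnion fun n => let ⟨β, hβ⟩ := hf n; ih β.1 β.2 hβ

/-- If `X` is an `ℱ`-Borel subset of `Y` (i.e. `X ∈ ℱ_α(Y)` for some
`α < ω₁`), then every `y ∈ Y \ X` is contained in a `G_δ` subset of `Y`
disjoint from `X`. -/
theorem gdelta_separation_of_FBorel {Y : Type*} [TopologicalSpace Y] (X : Set Y)
    (hX : ∃ α : Ordinal.{0}, α < ω₁ ∧ X ∈ Fclass Y α) :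
    ∀ y ∈ Xᶜ, ∃ G : Set Y, IsGδ G ∧ y ∈ G ∧ G ⊆ Xᶜ := by
  obtain ⟨α, -, hXα⟩ := hX
  exact isUnionOfGδ_compl_of_mem_Fclass α hXα
end

section
/- Let X be a non-reflexive Banach space. Then no weakly regularly closed subset of X with nonempty weak interior is weakly σ-compact; in particular, if K_n ⊆ X are weakly compact sets whose union has nonempty interior in the weak topology, a contradiction arises. Concretely: if a countable union of weakly compact subsets of a Banach space X contains a norm-open ball, then X is reflexive. -/
/-!
Weakly compact sets are norm closed, so by the Baire category theorem one of the `K n` contains a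
closed ball. Closed balls are convex and norm closed, hence weakly closed, so that ball is weakly
compact; since translations and dilations are weakly continuous, every closed ball is then weakly
compact, in particular the unit ball.
-/

open Metric Set Pointwise

theorem exists_nonempty_interior_of_isOpen_subset_iUnion {α ι : Type*} [TopologicalSpace α]
    [BaireSpace α] [Countable ι] {U : Set α} (hU : IsOpen U) (hne : U.Nonempty)
    {F : ι → Set α} (hF : ∀ i, IsClosed (F i)) (hUF : U ⊆ ⋃ i, F i) :
    ∃ i, (interior (F i)).Nonempty := by
  by_contra! h
  exact not_isMeagre_of_isOpen hU hne <|
    (isMeagre_iUnion fun i ↦ ((hF i).isNowhereDense_iff.2 (h i)).isMeagre).mono hUF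

theorem Convex.isClosed_toWeakSpace_image {E : Type*} [AddCommGroup E] [Module ℝ E]
    [TopologicalSpace E] [IsTopologicalAddGroup E] [ContinuousSMul ℝ E] [LocallyConvexSpace ℝ E]
    {s : Set E} (hs : Convex ℝ s) (hc : IsClosed s) : IsClosed (toWeakSpace ℝ E '' s) := by
  rw [← closure_eq_iff_isClosed, ← hs.toWeakSpace_closure ℝ, hc.closure_eq]

section NormedSpace

variable {X : Type*} [NormedAddCommGroup X] [NormedSpace ℝ X]

theorem IsCompact.isClosed_of_toWeakSpace {s : Set X} (hs : IsCompact (toWeakSpace ℝ X '' s)) :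
    IsClosed s := by
  rw [← (toWeakSpace ℝ X).injective.preimage_image s]
  exact hs.isClosed.preimage (toWeakSpaceCLM ℝ X).continuous

theorem IsCompact.toWeakSpace_closedBall {z : X} {r : ℝ} (hr : 0 < r)
    (h : IsCompact (toWeakSpace ℝ X '' closedBall z r)) (y : X) (s : ℝ) :
    IsCompact (toWeakSpace ℝ X '' closedBall y s) := by
  rcases lt_or_ge s 0 with hs | hs
  · simp [closedBall_eq_empty.2 hs]
  have hball : closedBall y s = y +ᵥ (s / r) • (-z +ᵥ closedBall z r) := by
    rw [vadd_closedBall'', vadd_eq_add, neg_add_cancel, smul_closedBall _ _ hr.le, smul_zero,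
      vadd_closedBall'', vadd_eq_add, add_zero, Real.norm_of_nonneg (div_nonneg hs hr.le),
      div_mul_cancel₀ _ hr.ne']
  rw [hball, image_vadd_distrib, image_smul_set, image_vadd_distrib]
  exact ((h.vadd _).smul _).vadd _

end NormedSpace

/-- If a countable union of weakly compact subsets of a Banach space `X`
contains a norm-open ball, then `X` is reflexive, i.e. its closed unit ball is
weakly compact. -/
theorem reflexive_of_ball_subset_iUnion_weaklyCompact {X : Type*}
    [NormedAddCommGroup X] [NormedSpace ℝ X] [CompleteSpace X]
    (K : ℕ → Set X) (hK : ∀ n, IsCompact (toWeakSpace ℝ X '' K n))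
    (x : X) (ε : ℝ) (hε : 0 < ε) (hball : ball x ε ⊆ ⋃ n, K n) :
    IsCompact (toWeakSpace ℝ X '' closedBall (0 : X) 1) := by
  obtain ⟨n, z, hz⟩ := exists_nonempty_interior_of_isOpen_subset_iUnion isOpen_ball
    (nonempty_ball.2 hε) (fun n ↦ (hK n).isClosed_of_toWeakSpace) hball
  obtain ⟨r, hr, hrK⟩ := nhds_basis_closedBall.mem_iff.1 (mem_interior_iff_mem_nhds.1 hz)
  have hcompact : IsCompact (toWeakSpace ℝ X '' closedBall z r) :=
    (hK n).of_isClosed_subset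
      ((convex_closedBall z r).isClosed_toWeakSpace_image isClosed_closedBall) (image_mono hrK)
  exact hcompact.toWeakSpace_closedBall hr 0 1
end
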